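/- arXiv:2411.02918 — 6 statements merged into one kernel-verified Lean document; each statement's English description precedes it below -/
import Mathlib

section
/- Let T be a tree of order n with n ≥ 3. Then φ(T) ≥ ⌈n/2⌉ + 1. -/
open SimpleGraph

/-- A dissociation set: a set of vertices inducing a subgraph of maximum degree at most 1,
i.e., every vertex of `S` has at most one neighbour inside `S`. -/
def IsDissoc {V : Type*} (G : SimpleGraph V) (S : Set V) : Prop :=
  ∀ v ∈ S, {u | u ∈ S ∧ G.Adj v u}.Subsingleton

/-- A maximal dissociation set: a dissociation set not properly contained in another one. -/
def IsMaxDissoc {V : Type*} (G : SimpleGraph V) (S : Set V) : Prop :=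
  IsDissoc G S ∧ ∀ T : Set V, IsDissoc G T → S ⊆ T → S = T

/-- `phi G` is the number of maximal dissociation sets of `G`. -/
noncomputable def phi {V : Type*} (G : SimpleGraph V) : ℕ :=
  {S : Set V | IsMaxDissoc G S}.ncard

/-- The number of maximal dissociation sets of `G` not containing `u`. -/
noncomputable def phiNot {V : Type*} (G : SimpleGraph V) (u : V) : ℕ :=
  {S : Set V | IsMaxDissoc G S ∧ u ∉ S}.ncard

/-- The number of maximal dissociation sets `S` of `G` with `u ∈ S` and
`u` of degree 0 in the subgraph induced by `S`. -/
noncomputable def phi0 {V : Type*} (G : SimpleGraph V) (u : V) : ℕ :=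
  {S : Set V | IsMaxDissoc G S ∧ u ∈ S ∧ ∀ x ∈ S, ¬ G.Adj u x}.ncard

/-- The number of maximal dissociation sets `S` of `G` with `u ∈ S` and
`u` of degree 1 in the subgraph induced by `S`. -/
noncomputable def phi1 {V : Type*} (G : SimpleGraph V) (u : V) : ℕ :=
  {S : Set V | IsMaxDissoc G S ∧ u ∈ S ∧ ∃! x, x ∈ S ∧ G.Adj u x}.ncard

/-- A unicyclic graph: a connected graph whose number of edges equals its number of vertices
(equivalently, a connected graph with exactly one cycle). -/
def IsUnicyclic {V : Type*} [Fintype V] (G : SimpleGraph V) : Prop :=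
  G.Connected ∧ G.edgeSet.ncard = Fintype.card V

/-- The tree `T(p,q)` (for `q ≤ p`): obtained from the star `K_{1,p}` by subdividing
exactly `q` of its edges.  The centre is `Sum.inl ()`, the `p` neighbours of the centre are
`Sum.inr (Sum.inl i)`, and for `j < q` the vertex `Sum.inr (Sum.inr j)` is the subdivision
pendant attached to the `j`-th neighbour.  It has `1 + p + q` vertices. -/
def treeT (p q : ℕ) (h : q ≤ p) : SimpleGraph (Unit ⊕ Fin p ⊕ Fin q) :=
  SimpleGraph.fromRel fun a b =>
    (∃ i : Fin p, a = Sum.inl () ∧ b = Sum.inr (Sum.inl i)) ∨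
    (∃ j : Fin q, a = Sum.inr (Sum.inl (Fin.castLE h j)) ∧ b = Sum.inr (Sum.inr j))

/-- The unicyclic graph `U(p,q)` (for `q ≤ p`): obtained by identifying one vertex of the
triangle `K₃` with the centre of `T(p,q)`.  The centre is `Sum.inl ()`, the two other triangle
vertices are `Sum.inr (Sum.inl 0)` and `Sum.inr (Sum.inl 1)`, and the copy of `T(p,q)` sits on
the remaining vertices.  It has `3 + p + q` vertices. -/
def graphU (p q : ℕ) (h : q ≤ p) : SimpleGraph (Unit ⊕ Fin 2 ⊕ Fin p ⊕ Fin q) :=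
  SimpleGraph.fromRel fun a b =>
    (a = Sum.inl () ∧ b = Sum.inr (Sum.inl 0)) ∨
    (a = Sum.inl () ∧ b = Sum.inr (Sum.inl 1)) ∨
    (a = Sum.inr (Sum.inl 0) ∧ b = Sum.inr (Sum.inl 1)) ∨
    (∃ i : Fin p, a = Sum.inl () ∧ b = Sum.inr (Sum.inr (Sum.inl i))) ∨
    (∃ j : Fin q, a = Sum.inr (Sum.inr (Sum.inl (Fin.castLE h j))) ∧
      b = Sum.inr (Sum.inr (Sum.inr j)))

/-- The unicyclic graph obtained from the cycle `C_r` by attaching one pendant vertex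
`Sum.inr j` to the cycle vertex `Sum.inl (f j)` for each `j : Fin t`.  For injective `f`
this is a member of the class `𝒰_{r,t}`. -/
def graphUrtF (r t : ℕ) (f : Fin t → Fin r) : SimpleGraph (Fin r ⊕ Fin t) :=
  SimpleGraph.fromRel fun a b =>
    (∃ i j : Fin r, a = Sum.inl i ∧ b = Sum.inl j ∧ (cycleGraph r).Adj i j) ∨
    (∃ j : Fin t, a = Sum.inl (f j) ∧ b = Sum.inr j)

/-- The canonical member `U_{r,t}` of `𝒰_{r,t}` (for `t ≤ r`): the cycle `C_r` with one
pendant vertex attached to each of its first `t` vertices. -/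
def graphUrt (r t : ℕ) (h : t ≤ r) : SimpleGraph (Fin r ⊕ Fin t) :=
  graphUrtF r t (Fin.castLE h)

/-- A caterpillar: a tree in which deleting all vertices of degree 1 leaves a path. -/
def IsCaterpillar {V : Type*} [Fintype V] (G : SimpleGraph V) : Prop :=
  G.IsTree ∧ ∃ m : ℕ,
    Nonempty ((G.induce {v | 2 ≤ (G.neighborSet v).ncard}) ≃g SimpleGraph.pathGraph m)

/-- The graph `G₁` obtained from `U` by adding `k` new pendant vertices
`v₁ = Sum.inr 0, …, v_k = Sum.inr (k-1)`, each adjacent to `w`. -/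
def addPendants {V : Type*} (U : SimpleGraph V) (w : V) (k : ℕ) : SimpleGraph (V ⊕ Fin k) :=
  SimpleGraph.fromRel fun a b =>
    (∃ x y, a = Sum.inl x ∧ b = Sum.inl y ∧ U.Adj x y) ∨
    (∃ j : Fin k, a = Sum.inl w ∧ b = Sum.inr j)

/-- The graph `G₂ = G₁ - w v_k + v₁ v_k`: obtained from `U` by attaching the pendant vertices
`v₁, …, v_{k-1}` to `w` and the vertex `v_k` to `v₁`. -/
def swapPendant {V : Type*} (U : SimpleGraph V) (w : V) (k : ℕ) : SimpleGraph (V ⊕ Fin k) :=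
  SimpleGraph.fromRel fun a b =>
    (∃ x y, a = Sum.inl x ∧ b = Sum.inl y ∧ U.Adj x y) ∨
    (∃ j : Fin k, j.val < k - 1 ∧ a = Sum.inl w ∧ b = Sum.inr j) ∨
    (∃ j₀ j₁ : Fin k, j₀.val = 0 ∧ j₁.val = k - 1 ∧ a = Sum.inr j₀ ∧ b = Sum.inr j₁)

/-- The graph obtained from `H` by attaching a pendant path of length 2 at `w`:
two new vertices `v = Sum.inr 0` and `u = Sum.inr 1` with edges `w v` and `v u`. -/
def addPath2 {V : Type*} (H : SimpleGraph V) (w : V) : SimpleGraph (V ⊕ Fin 2) :=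
  SimpleGraph.fromRel fun a b =>
    (∃ x y, a = Sum.inl x ∧ b = Sum.inl y ∧ H.Adj x y) ∨
    (a = Sum.inl w ∧ b = Sum.inr 0) ∨
    (a = Sum.inr 0 ∧ b = Sum.inr 1)

/-!
Two-colour the tree and let `A` be a colour class. Extend `A` to a maximal dissociation set `S₀`,
and for each `a ∈ A` build a maximal dissociation set `S_a` that misses a nonempty part of `A`
of a rigid shape: either `{a}` alone (when some neighbour `b` of `a` has exactly one further
neighbour, or when all neighbours of `a` are leaves), or `N(b) \ {a}` for a neighbour `b` of `a`
with at least two further neighbours. Since no two vertices of a tree share two neighbours, the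
missing part determines `a`, so the `S_a` are distinct and differ from `S₀`: `φ(T) ≥ |A| + 1`.
Taking the larger colour class gives `|A| ≥ ⌈n/2⌉`.
-/

section

variable {V : Type*} {G : SimpleGraph V}

lemma isDissoc_of_forall_adj_eq {S : Set V} (h : ∀ v ∈ S, ∃ c, ∀ u ∈ S, G.Adj v u → u = c) :
    IsDissoc G S := by
  intro v hv u₁ ⟨hu₁, hvu₁⟩ u₂ ⟨hu₂, hvu₂⟩
  obtain ⟨c, hc⟩ := h v hv
  rw [hc u₁ hu₁ hvu₁, hc u₂ hu₂ hvu₂]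

lemma IsDissoc.eq_of_adj {S : Set V} (hS : IsDissoc G S) {v u₁ u₂ : V} (hv : v ∈ S)
    (hu₁ : u₁ ∈ S) (hu₂ : u₂ ∈ S) (hvu₁ : G.Adj v u₁) (hvu₂ : G.Adj v u₂) : u₁ = u₂ :=
  hS v hv ⟨hu₁, hvu₁⟩ ⟨hu₂, hvu₂⟩

lemma exists_isMaxDissoc_superset [Finite V] {D : Set V} (hD : IsDissoc G D) :
    ∃ S, IsMaxDissoc G S ∧ D ⊆ S := by
  obtain ⟨S, ⟨hS, hDS⟩, hmax⟩ :=
    (Set.toFinite {S : Set V | IsDissoc G S ∧ D ⊆ S}).exists_maximalFor id _ ⟨D, hD, le_rfl⟩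
  exact ⟨S, ⟨hS, fun T hT hST => hST.antisymm (hmax ⟨hT, hDS.trans hST⟩ hST)⟩, hDS⟩

lemma exists_isMaxDissoc_sdiff_eq_singleton [Finite V] {A D : Set V} {a : V} (ha : a ∈ A)
    (hD : IsDissoc G D) (hAD : A \ {a} ⊆ D) (hblock : ∀ S, IsDissoc G S → D ⊆ S → a ∉ S) :
    ∃ S, IsMaxDissoc G S ∧ A \ S = {a} := by
  obtain ⟨S, hS, hDS⟩ := exists_isMaxDissoc_superset hD
  refine ⟨S, hS, Set.Subset.antisymm (fun y ⟨hyA, hyS⟩ => ?_) ?_⟩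
  · by_contra hya
    exact hyS (hDS (hAD ⟨hyA, hya⟩))
  · simpa using ⟨ha, hblock S hS.1 hDS⟩

namespace SimpleGraph

lemma IsAcyclic.eq_of_adj_of_adj (hG : G.IsAcyclic) {b b' x y : V} (hxy : x ≠ y)
    (hbx : G.Adj b x) (hby : G.Adj b y) (hb'x : G.Adj b' x) (hb'y : G.Adj b' y) : b = b' := by
  let path (c : V) (hcx : G.Adj c x) (hcy : G.Adj c y) : G.Path x y :=
    ⟨.cons hcx.symm (.cons hcy .nil), by simp [hcx.ne', hcy.ne, hxy]⟩
  have h := (hG.subsingleton_path x y).elim (path b hbx hby) (path b' hb'x hb'y)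
  simpa [path] using congrArg (·.1.support) h

lemma Coloring.isBipartiteWith_compl (c : G.Coloring (Fin 2)) :
    G.IsBipartiteWith {v | c v = 0} {v | c v = 0}ᶜ where
  disjoint := disjoint_compl_right
  mem_of_adj v w h := by
    have := c.valid h
    simp only [Set.mem_ofPred_eq, Set.mem_compl_iff]
    omega

lemma Connected.exists_adj_ne_of_three_le_card [Fintype V] (hG : G.Connected)
    (hV : 3 ≤ Fintype.card V) {a b : V} (hb : ∀ c, G.Adj b c → c = a) :
    ∃ c, G.Adj a c ∧ c ≠ b := by
  classical
  by_contra! ha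
  obtain ⟨w, -, hw⟩ := Finset.exists_mem_notMem_of_card_lt_card
    (s := {a, b}) (t := Finset.univ) (Finset.card_le_two.trans_lt (by rw [Finset.card_univ]; omega))
  obtain ⟨d, -, hd, hd'⟩ := (hG.preconnected a w).some.exists_boundary_dart {a, b} (by simp)
    (by simpa using hw)
  rcases hd with hd | hd
  · exact hd' (.inr (ha _ (hd ▸ d.adj)))
  · exact hd' (.inl (hb _ (hd ▸ d.adj)))

/-- The shapes of `A \ S` for the maximal dissociation set `S` assigned to a vertex `a` of a
bipartition class `A`; in an acyclic graph the shape determines `a`. -/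
def IsGap (G : SimpleGraph V) (a : V) (M : Set V) : Prop :=
  M = {a} ∨ ∃ b, G.Adj a b ∧ M = G.neighborSet b \ {a} ∧ M.Nontrivial

lemma IsGap.nonempty {a : V} {M : Set V} (h : G.IsGap a M) : M.Nonempty := by
  rcases h with rfl | ⟨-, -, -, hM⟩
  exacts [Set.singleton_nonempty a, hM.nonempty]

lemma IsAcyclic.eq_of_isGap (hG : G.IsAcyclic) {a a' : V} {M : Set V} (h : G.IsGap a M)
    (h' : G.IsGap a' M) : a = a' := by
  rcases h with rfl | ⟨b, hab, hM, hMnt⟩ <;> rcases h' with hM' | ⟨b', hab', hM', hMnt'⟩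
  · exact Set.singleton_eq_singleton_iff.mp hM'
  · exact absurd hMnt' Set.not_nontrivial_singleton
  · exact absurd (hM' ▸ hMnt) Set.not_nontrivial_singleton
  · obtain ⟨x, hx, y, hy, hxy⟩ := hMnt
    have hx' := hM' ▸ hx
    have hy' := hM' ▸ hy
    rw [hM] at hx hy
    obtain rfl := hG.eq_of_adj_of_adj hxy hx.1 hy.1 hx'.1 hy'.1
    by_contra hne
    have : a' ∈ M := hM ▸ ⟨hab'.symm, Ne.symm hne⟩
    exact (hM' ▸ this).2 rfl

namespace IsBipartiteWith

variable {A B : Set V} {a b : V}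

lemma not_adj_of_mem_left (hAB : G.IsBipartiteWith A B) {x y : V} (hx : x ∈ A) (hy : y ∈ A) :
    ¬ G.Adj x y :=
  fun h => Set.disjoint_left.mp hAB.disjoint hy (hAB.mem_of_mem_adj hx h)

lemma exists_isMaxDissoc_sdiff_eq_singleton_of_pendant [Finite V] (hAB : G.IsBipartiteWith A B)
    (ha : a ∈ A) {b₁ b₂ : V} (hne : b₁ ≠ b₂) (h₁ : G.Adj a b₁) (h₂ : G.Adj a b₂)
    (hb₁ : ∀ c, G.Adj b₁ c → c = a) (hb₂ : ∀ c, G.Adj b₂ c → c = a) :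
    ∃ S, IsMaxDissoc G S ∧ A \ S = {a} := by
  refine exists_isMaxDissoc_sdiff_eq_singleton (D := A \ {a} ∪ {b₁, b₂}) ha ?_
    Set.subset_union_left ?_
  · refine isDissoc_of_forall_adj_eq fun v hv => ⟨a, fun u hu hvu => ?_⟩
    rcases hv with ⟨hvA, hva⟩ | rfl | rfl
    · rcases hu with ⟨huA, -⟩ | rfl | rfl
      · exact absurd hvu (hAB.not_adj_of_mem_left hvA huA)
      · exact absurd (hb₁ v hvu.symm) hva
      · exact absurd (hb₂ v hvu.symm) hva
    · exact hb₁ u hvu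
    · exact hb₂ u hvu
  · intro S hS hDS haS
    exact hne (hS.eq_of_adj haS (hDS (by simp)) (hDS (by simp)) h₁ h₂)

lemma exists_isMaxDissoc_sdiff_eq_singleton_of_adj [Finite V] (hAB : G.IsBipartiteWith A B)
    (ha : a ∈ A) {x : V} (hab : G.Adj a b) (hbx : G.Adj b x) (hxa : x ≠ a)
    (hb : ∀ c, G.Adj b c → c = a ∨ c = x) :
    ∃ S, IsMaxDissoc G S ∧ A \ S = {a} := by
  have hxA : x ∈ A := hAB.mem_of_mem_adj' (hAB.mem_of_mem_adj ha hab) hbx.symm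
  refine exists_isMaxDissoc_sdiff_eq_singleton (D := A \ {a} ∪ {b}) ha ?_
    Set.subset_union_left ?_
  · refine isDissoc_of_forall_adj_eq fun v hv => ?_
    rcases hv with ⟨hvA, -⟩ | rfl
    · refine ⟨b, fun u hu hvu => ?_⟩
      rcases hu with ⟨huA, -⟩ | rfl
      · exact absurd hvu (hAB.not_adj_of_mem_left hvA huA)
      · rfl
    · refine ⟨x, fun u hu hvu => ?_⟩
      rcases hu with ⟨-, hua⟩ | rfl
      · exact (hb u hvu).resolve_left hua
      · exact (hvu.ne rfl).elim
  · intro S hS hDS haS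
    exact hxa (hS.eq_of_adj (hDS (by simp)) (hDS (.inl ⟨hxA, hxa⟩)) haS hbx hab.symm)

lemma exists_isMaxDissoc_sdiff_eq_neighborSet [Finite V] (hAB : G.IsBipartiteWith A B)
    (ha : a ∈ A) (hab : G.Adj a b) :
    ∃ S, IsMaxDissoc G S ∧ A \ S = G.neighborSet b \ {a} := by
  have hD : IsDissoc G ({a, b} ∪ A \ G.neighborSet b) := by
    refine isDissoc_of_forall_adj_eq fun v hv => ?_
    rcases hv with (rfl | rfl) | ⟨hvA, hvb⟩
    · refine ⟨b, fun u hu hvu => ?_⟩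
      rcases hu with (rfl | rfl) | ⟨huA, -⟩
      · exact (hvu.ne rfl).elim
      · rfl
      · exact absurd hvu (hAB.not_adj_of_mem_left ha huA)
    · refine ⟨a, fun u hu hvu => ?_⟩
      rcases hu with (rfl | rfl) | ⟨-, hub⟩
      · rfl
      · exact (hvu.ne rfl).elim
      · exact absurd hvu hub
    · refine ⟨a, fun u hu hvu => ?_⟩
      rcases hu with (rfl | rfl) | ⟨huA, -⟩
      · rfl
      · exact absurd hvu.symm hvb
      · exact absurd hvu (hAB.not_adj_of_mem_left hvA huA)
  obtain ⟨S, hS, hDS⟩ := exists_isMaxDissoc_superset hD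
  have haS : a ∈ S := hDS (by simp)
  have hbS : b ∈ S := hDS (by simp)
  refine ⟨S, hS, Set.ext fun y => ⟨fun ⟨hyA, hyS⟩ => ⟨?_, ?_⟩, fun ⟨hby, hya⟩ => ⟨?_, ?_⟩⟩⟩
  · by_contra hby
    exact hyS (hDS (.inr ⟨hyA, hby⟩))
  · rintro rfl
    exact hyS haS
  · exact hAB.mem_of_mem_adj' (hAB.mem_of_mem_adj ha hab) hby.symm
  · exact fun hyS => hya (hS.1.eq_of_adj hbS hyS haS hby hab.symm)

lemma exists_isMaxDissoc_isGap [Fintype V] (hG : G.IsTree) (hV : 3 ≤ Fintype.card V)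
    (hAB : G.IsBipartiteWith A B) (ha : a ∈ A) : ∃ S, IsMaxDissoc G S ∧ G.IsGap a (A \ S) := by
  by_cases hbranch : ∃ b, G.Adj a b ∧ (G.neighborSet b \ {a}).Nontrivial
  · obtain ⟨b, hab, hb⟩ := hbranch
    obtain ⟨S, hS, hAS⟩ := hAB.exists_isMaxDissoc_sdiff_eq_neighborSet ha hab
    exact ⟨S, hS, .inr ⟨b, hab, hAS, hAS ▸ hb⟩⟩
  suffices ∃ S, IsMaxDissoc G S ∧ A \ S = {a} from this.imp fun S h => ⟨h.1, .inl h.2⟩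
  by_cases hpath : ∃ b x, G.Adj a b ∧ G.Adj b x ∧ x ≠ a
  · obtain ⟨b, x, hab, hbx, hxa⟩ := hpath
    refine hAB.exists_isMaxDissoc_sdiff_eq_singleton_of_adj ha hab hbx hxa fun c hbc => ?_
    by_contra! hc
    exact hbranch ⟨b, hab, x, ⟨hbx, hxa⟩, c, ⟨hbc, hc.1⟩, hc.2.symm⟩
  push Not at hpath
  have : Nontrivial V := Fintype.one_lt_card_iff_nontrivial.mp (by omega)
  obtain ⟨b₁, h₁⟩ := hG.connected.preconnected.exists_adj_of_nontrivial a
  obtain ⟨b₂, h₂, hne⟩ := hG.connected.exists_adj_ne_of_three_le_card hV (hpath b₁ · h₁)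
  exact hAB.exists_isMaxDissoc_sdiff_eq_singleton_of_pendant ha hne.symm h₁ h₂
    (hpath b₁ · h₁) (hpath b₂ · h₂)

lemma ncard_add_one_le_phi [Fintype V] (hG : G.IsTree) (hV : 3 ≤ Fintype.card V)
    (hAB : G.IsBipartiteWith A B) : A.ncard + 1 ≤ phi G := by
  choose! f hf using fun a (ha : a ∈ A) => hAB.exists_isMaxDissoc_isGap hG hV ha
  have hA : IsDissoc G A := isDissoc_of_forall_adj_eq fun v hv =>
    ⟨v, fun u hu hvu => absurd hvu (hAB.not_adj_of_mem_left hv hu)⟩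
  obtain ⟨S₀, hS₀, hAS₀⟩ := exists_isMaxDissoc_superset hA
  have hinj : Set.InjOn f A := fun a ha a' ha' h =>
    hG.isAcyclic.eq_of_isGap (hf a ha).2 (h ▸ (hf a' ha').2)
  have hS₀f : S₀ ∉ f '' A := by
    rintro ⟨a, ha, rfl⟩
    obtain ⟨y, hyA, hyS⟩ := (hf a ha).2.nonempty
    exact hyS (hAS₀ hyA)
  calc A.ncard + 1 = (insert S₀ (f '' A)).ncard := by
        rw [Set.ncard_insert_of_notMem hS₀f, hinj.ncard_image]
    _ ≤ phi G := Set.ncard_le_ncard (by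
        rintro S (rfl | ⟨a, ha, rfl⟩)
        exacts [hS₀, (hf a ha).1])

end IsBipartiteWith

end SimpleGraph

end

/-- every tree of order `n ≥ 3` has at least `⌈n/2⌉ + 1`
maximal dissociation sets. -/
theorem stmt4 {V : Type*} [Fintype V] (T : SimpleGraph V) (n : ℕ) (hn : 3 ≤ n)
    (hcard : Fintype.card V = n) (hT : T.IsTree) :
    (n + 1) / 2 + 1 ≤ phi T := by
  have hV : 3 ≤ Fintype.card V := hcard ▸ hn
  have hA := hT.coloringTwo.isBipartiteWith_compl
  have hsum := Set.ncard_add_ncard_compl {v | hT.coloringTwo v = 0}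
  rw [Nat.card_eq_fintype_card, hcard] at hsum
  have := hA.ncard_add_one_le_phi hT hV
  have := hA.symm.ncard_add_one_le_phi hT hV
  omega
end

section
/- For the path P_n on n ≥ 3 vertices, φ(P_n) ≥ ⌈n/2⌉ + 1, with equality if and only if n ∈ {3, 4, 5}. -/
open SimpleGraph

namespace S6

def extS {n : ℕ} (s : Fin n → Bool) (i : ℕ) : Bool :=
  if h : i < n then s ⟨i, h⟩ else false

lemma extS_true_lt {n : ℕ} {s : Fin n → Bool} {i : ℕ} (h : extS s i = true) : i < n := by
  by_contra hc
  simp [extS, hc] at h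

def Q (n : ℕ) (s : Fin n → Bool) : Prop :=
  (∀ i < n, ¬(extS s i = true ∧ extS s (i+1) = true ∧ extS s (i+2) = true)) ∧
  (∀ i < n, extS s i = false →
     (1 ≤ i ∧ extS s (i-1) = true ∧ extS s (i+1) = true) ∨
     (2 ≤ i ∧ extS s (i-1) = true ∧ extS s (i-2) = true) ∨
     (extS s (i+1) = true ∧ extS s (i+2) = true))

instance (n : ℕ) : DecidablePred (Q n) := fun s => by unfold Q; infer_instance

def N (n : ℕ) : ℕ := (Finset.univ.filter (Q n)).card

def toSet {n : ℕ} (s : Fin n → Bool) : Set (Fin n) := {v | s v = true}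

lemma mem_toSet {n : ℕ} {s : Fin n → Bool} {v : Fin n} :
    v ∈ toSet s ↔ extS s v.val = true := by
  simp [toSet, extS, v.isLt]

lemma toSet_inj {n : ℕ} : Function.Injective (toSet (n := n)) := by
  intro a b h
  funext i
  have h1 : a i = true ↔ b i = true := by
    constructor <;> intro hx
    · have : i ∈ toSet a := hx
      rw [h] at this; exact this
    · have : i ∈ toSet b := hx
      rw [← h] at this; exact this
  cases ha : a i <;> cases hb : b i <;> simp_all

lemma dissoc_iff' {n : ℕ} (T : Set (Fin n)) :
    IsDissoc (pathGraph n) T ↔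
      ∀ a b c : Fin n, a.val + 1 = b.val → b.val + 1 = c.val →
        a ∈ T → b ∈ T → c ∈ T → False := by
  constructor
  · intro hD a b c hab hbc ha hb hc
    have h1 : a ∈ {u | u ∈ T ∧ (pathGraph n).Adj b u} := ⟨ha, by rw [pathGraph_adj]; omega⟩
    have h2 : c ∈ {u | u ∈ T ∧ (pathGraph n).Adj b u} := ⟨hc, by rw [pathGraph_adj]; omega⟩
    have := hD b hb h1 h2
    have : a.val = c.val := congrArg Fin.val this
    omega
  · intro h v hv u hu w hw
    obtain ⟨huT, huA⟩ := hu
    obtain ⟨hwT, hwA⟩ := hw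
    rw [pathGraph_adj] at huA hwA
    by_contra hne
    have hne' : u.val ≠ w.val := fun hh => hne (Fin.ext hh)
    rcases huA with h1 | h1 <;> rcases hwA with h2 | h2
    · exact hne' (by omega)
    · exact h w v u (by omega) (by omega) hwT hv huT
    · exact h u v w (by omega) (by omega) huT hv hwT
    · exact hne' (by omega)

lemma dissoc_iff_Q1 {n : ℕ} (s : Fin n → Bool) :
    IsDissoc (pathGraph n) (toSet s) ↔
      ∀ i < n, ¬(extS s i = true ∧ extS s (i+1) = true ∧ extS s (i+2) = true) := by
  rw [dissoc_iff']
  constructor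
  · intro h i hi ⟨h0, h1, h2⟩
    have hi2 : i + 2 < n := extS_true_lt h2
    exact h ⟨i, hi⟩ ⟨i+1, by omega⟩ ⟨i+2, hi2⟩ rfl rfl
      (mem_toSet.2 h0) (mem_toSet.2 h1) (mem_toSet.2 h2)
  · intro h a b c hab hbc ha hb hc
    refine h a.val a.isLt ⟨mem_toSet.1 ha, ?_, ?_⟩
    · rw [hab]; exact mem_toSet.1 hb
    · rw [show a.val + 2 = c.val by omega]; exact mem_toSet.1 hc

lemma isMaxDissoc_iff {V : Type*} (G : SimpleGraph V) (S : Set V) :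
    IsMaxDissoc G S ↔ IsDissoc G S ∧ ∀ v ∉ S, ¬ IsDissoc G (insert v S) := by
  constructor
  · rintro ⟨h1, h2⟩
    refine ⟨h1, fun v hv hins => hv ?_⟩
    have := h2 _ hins (Set.subset_insert v S)
    rw [this]
    exact Set.mem_insert v S
  · rintro ⟨h1, h2⟩
    refine ⟨h1, fun T hT hST => ?_⟩
    by_contra hne
    have hts : ¬ T ⊆ S := fun h => hne (Set.Subset.antisymm hST h)
    obtain ⟨v, hvT, hvS⟩ := Set.not_subset.1 hts
    have hins : IsDissoc G (insert v S) := by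
      intro x hx
      have hsub : {u | u ∈ insert v S ∧ G.Adj x u} ⊆ {u | u ∈ T ∧ G.Adj x u} := by
        intro u ⟨hu1, hu2⟩
        exact ⟨hu1.elim (fun h => h ▸ hvT) (fun h => hST h), hu2⟩
      have hxT : x ∈ T := hx.elim (fun h => h ▸ hvT) (fun h => hST h)
      exact (hT x hxT).anti hsub
    exact h2 v hvS hins

lemma insert_not_dissoc_iff {n : ℕ} {s : Fin n → Bool}
    (hd : IsDissoc (pathGraph n) (toSet s)) (v : Fin n) :
    ¬ IsDissoc (pathGraph n) (insert v (toSet s)) ↔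
      (1 ≤ v.val ∧ extS s (v.val-1) = true ∧ extS s (v.val+1) = true) ∨
      (2 ≤ v.val ∧ extS s (v.val-1) = true ∧ extS s (v.val-2) = true) ∨
      (extS s (v.val+1) = true ∧ extS s (v.val+2) = true) := by
  constructor
  · intro hnd
    rw [dissoc_iff'] at hnd
    push_neg at hnd
    obtain ⟨a, b, c, hab, hbc, ha, hb, hc, _⟩ := hnd
    have hmem : ∀ x : Fin n, x ∈ insert v (toSet s) → x = v ∨ extS s x.val = true := by
      intro x hx
      rcases hx with h | h
      · exact Or.inl h
      · exact Or.inr (mem_toSet.1 h)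
    rcases hmem b hb with hbv | hbs
    · -- b = v : case (a)
      subst hbv
      have hav : a ≠ b := fun h => by have := congrArg Fin.val h; omega
      have hcv : c ≠ b := fun h => by have := congrArg Fin.val h; omega
      have has : extS s a.val = true := (hmem a ha).resolve_left hav
      have hcs : extS s c.val = true := (hmem c hc).resolve_left hcv
      left
      refine ⟨by omega, ?_, ?_⟩
      · rwa [show b.val - 1 = a.val by omega]
      · rwa [show b.val + 1 = c.val by omega]
    · rcases hmem c hc with hcv | hcs
      · -- c = v : case (b)
        subst hcv
        have hav : a ≠ c := fun h => by have := congrArg Fin.val h; omega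
        have has : extS s a.val = true := (hmem a ha).resolve_left hav
        right; left
        refine ⟨by omega, ?_, ?_⟩
        · rwa [show c.val - 1 = b.val by omega]
        · rwa [show c.val - 2 = a.val by omega]
      · rcases hmem a ha with hav | has
        · -- a = v : case (c)
          subst hav
          right; right
          refine ⟨?_, ?_⟩
          · rwa [show a.val + 1 = b.val from hab]
          · rwa [show a.val + 2 = c.val by omega]
        · -- all in S : contradiction with hd
          rw [dissoc_iff'] at hd
          exact absurd (hd a b c hab hbc (mem_toSet.2 has) (mem_toSet.2 hbs) (mem_toSet.2 hcs)) not_false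
  · intro hloc hD
    rw [dissoc_iff'] at hD
    rcases hloc with ⟨h1, hl, hr⟩ | ⟨h1, hl, hr⟩ | ⟨hl, hr⟩
    · have hrn : v.val + 1 < n := extS_true_lt hr
      exact hD ⟨v.val - 1, by omega⟩ v ⟨v.val + 1, hrn⟩ (by simp; omega) rfl
        (Set.mem_insert_of_mem _ (mem_toSet.2 hl)) (Set.mem_insert _ _)
        (Set.mem_insert_of_mem _ (mem_toSet.2 hr))
    · exact hD ⟨v.val - 2, by omega⟩ ⟨v.val - 1, by omega⟩ v (by simp; omega) (by simp; omega)
        (Set.mem_insert_of_mem _ (mem_toSet.2 hr))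
        (Set.mem_insert_of_mem _ (mem_toSet.2 hl)) (Set.mem_insert _ _)
    · have hrn : v.val + 2 < n := extS_true_lt hr
      exact hD v ⟨v.val + 1, by omega⟩ ⟨v.val + 2, hrn⟩ rfl rfl (Set.mem_insert _ _)
        (Set.mem_insert_of_mem _ (mem_toSet.2 hl))
        (Set.mem_insert_of_mem _ (mem_toSet.2 hr))

lemma maxDissoc_iff_Q {n : ℕ} (s : Fin n → Bool) :
    IsMaxDissoc (pathGraph n) (toSet s) ↔ Q n s := by
  rw [isMaxDissoc_iff]
  constructor
  · rintro ⟨h1, h2⟩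
    refine ⟨(dissoc_iff_Q1 s).1 h1, ?_⟩
    intro i hi hei
    have hv : (⟨i, hi⟩ : Fin n) ∉ toSet s := by
      rw [mem_toSet]; simp [hei]
    exact (insert_not_dissoc_iff h1 ⟨i, hi⟩).1 (h2 _ hv)
  · rintro ⟨h1, h2⟩
    have hd := (dissoc_iff_Q1 s).2 h1
    refine ⟨hd, fun v hv => ?_⟩
    have hev : extS s v.val = false := by
      rw [mem_toSet] at hv
      simpa using hv
    exact (insert_not_dissoc_iff hd v).2 (h2 v.val v.isLt hev)

lemma phi_eq (n : ℕ) : phi (pathGraph n) = N n := by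
  classical
  have himg : {S : Set (Fin n) | IsMaxDissoc (pathGraph n) S} = toSet '' {s | Q n s} := by
    ext S
    simp only [Set.mem_setOf_eq, Set.mem_image]
    constructor
    · intro hS
      have heq : toSet (fun i => decide (i ∈ S)) = S := by
        ext i; simp [toSet]
      exact ⟨fun i => decide (i ∈ S), (maxDissoc_iff_Q _).1 (by rw [heq]; exact hS), heq⟩
    · rintro ⟨s, hs, rfl⟩
      exact (maxDissoc_iff_Q s).2 hs
  rw [phi, himg, Set.ncard_image_of_injective _ toSet_inj,
    show {s | Q n s} = (↑(Finset.univ.filter (Q n)) : Set (Fin n → Bool)) by ext x; simp,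
    Set.ncard_coe_finset]
  rfl

/-! ### Witness strings -/

def w1 (n : ℕ) : Fin n → Bool := fun i => !decide ((n - 1 - i.val) % 3 = 0)

def w2 (n : ℕ) : Fin n → Bool := fun i =>
  if n - 4 ≤ i.val then decide (n - 2 ≤ i.val) else !decide ((n - 5 - i.val) % 3 = 2)

lemma w1_spec (n j : ℕ) : extS (w1 n) j = true ↔ j < n ∧ (n - 1 - j) % 3 ≠ 0 := by
  by_cases h : j < n
  · simp [extS, w1, h]
  · simp [extS, h]

lemma w2_spec (n j : ℕ) :
    extS (w2 n) j = true ↔ j < n ∧ (n - 2 ≤ j ∨ (j < n - 4 ∧ (n - 5 - j) % 3 ≠ 2)) := by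
  by_cases h : j < n
  · by_cases h2 : n - 4 ≤ j
    · simp only [extS, dif_pos h, w2, if_pos h2, decide_eq_true_eq]
      omega
    · simp only [extS, dif_pos h, w2, if_neg h2, Bool.not_eq_true', decide_eq_false_iff_not]
      omega
  · simp [extS, h]

lemma Q_w1 (n : ℕ) (hn : 3 ≤ n) : Q n (w1 n) := by
  constructor
  · intro i hi ⟨h0, h1, h2⟩
    rw [w1_spec] at h0 h1 h2
    omega
  · intro i hi hei
    have hei' : ¬ (i < n ∧ (n - 1 - i) % 3 ≠ 0) := by
      rw [← w1_spec]; simp [hei]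
    simp only [w1_spec]
    omega

lemma Q_w2 (n : ℕ) (hn : 6 ≤ n) : Q n (w2 n) := by
  constructor
  · intro i hi ⟨h0, h1, h2⟩
    rw [w2_spec] at h0 h1 h2
    omega
  · intro i hi hei
    have hei' : ¬ (i < n ∧ (n - 2 ≤ i ∨ (i < n - 4 ∧ (n - 5 - i) % 3 ≠ 2))) := by
      rw [← w2_spec]; simp [hei]
    simp only [w2_spec]
    omega

/-! ### The append injection -/

def appendTwo {m : ℕ} (s : Fin m → Bool) : Fin (m + 2) → Bool :=
  fun i => if h : i.val < m then s ⟨i.val, h⟩ else if i.val = m then !(extS s (m - 1)) else true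

lemma extS_appendTwo {m : ℕ} (s : Fin m → Bool) (j : ℕ) :
    extS (appendTwo s) j =
      if j < m then extS s j else if j = m then !(extS s (m - 1)) else decide (j = m + 1) := by
  by_cases h1 : j < m
  · have h2 : j < m + 2 := by omega
    simp [extS, appendTwo, h1, h2]
  · by_cases h2 : j = m
    · subst h2
      simp [extS, appendTwo, h1, show j < j + 2 by omega]
    · by_cases h3 : j = m + 1
      · subst h3
        simp [extS, appendTwo, show ¬ (m+1 < m) by omega, show m + 1 ≠ m by omega,
          show m + 1 < m + 2 by omega]
      · simp [extS, appendTwo, h1, h2, h3, show ¬ (j < m + 2) by omega]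

lemma appendTwo_inj {m : ℕ} : Function.Injective (appendTwo (m := m)) := by
  intro a b h
  funext i
  have := congrFun h ⟨i.val, by omega⟩
  simpa [appendTwo, i.isLt] using this

lemma Q_appendTwo {m : ℕ} (hm : 6 ≤ m) {s : Fin m → Bool} (hs : Q m s) : Q (m + 2) (appendTwo s) := by
  obtain ⟨hs1, hs2⟩ := hs
  constructor
  · intro i hi ⟨h0, h1, h2⟩
    rw [extS_appendTwo] at h0 h1 h2
    by_cases c1 : i + 2 < m
    · exact hs1 i (by omega) ⟨by simpa [show i < m by omega] using h0,
        by simpa [show i + 1 < m by omega] using h1,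
        by simpa [c1] using h2⟩
    · -- i + 2 ≥ m
      by_cases c2 : i = m - 2
      · -- atoms at m-2, m-1, m
        have e1 : extS s (m - 1) = true := by
          rw [if_pos (show i + 1 < m by omega)] at h1
          rwa [show i + 1 = m - 1 by omega] at h1
        have e2 : (!(extS s (m-1))) = true := by
          simpa [show ¬ (i + 2 < m) by omega, show i + 2 = m by omega] using h2
        rw [e1] at e2; simp at e2
      · by_cases c3 : i = m - 1
        · have e1 : extS s (m - 1) = true := by
            rw [if_pos (show i < m by omega)] at h0
            rwa [show i = m - 1 by omega] at h0
          have e2 : (!(extS s (m-1))) = true := by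
            simpa [show ¬ (i + 1 < m) by omega, show i + 1 = m by omega] using h1
          rw [e1] at e2; simp at e2
        · -- i ≥ m, so i + 2 ≥ m + 2 : h2 atom is false
          have : i ≥ m := by omega
          have := h2
          rw [if_neg (by omega), if_neg (by omega)] at this
          simp at this
          omega
  · intro i hi hei
    rw [extS_appendTwo] at hei
    by_cases c1 : i < m
    · have hei' : extS s i = false := by simpa [c1] using hei
      have hold := hs2 i c1 hei'
      simp only [extS_appendTwo]
      rcases hold with ⟨ha, hb, hc⟩ | ⟨ha, hb, hc⟩ | ⟨hb, hc⟩
      · -- case (a): references i-1 (< m) and i+1; old true so i+1 < m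
        have : i + 1 < m := extS_true_lt hc
        left
        exact ⟨ha, by rw [if_pos (by omega)]; exact hb, by rw [if_pos this]; exact hc⟩
      · right; left
        exact ⟨ha, by rw [if_pos (by omega)]; exact hb, by rw [if_pos (by omega)]; exact hc⟩
      · have : i + 2 < m := extS_true_lt hc
        right; right
        exact ⟨by rw [if_pos (by omega)]; exact hb, by rw [if_pos this]; exact hc⟩
    · by_cases c2 : i = m
      · -- extS (append) m = false means extS s (m-1) = true
        have hsm : extS s (m - 1) = true := by
          have := hei
          rw [if_neg (by omega), if_pos c2] at this
          simpa using this
        left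
        subst c2
        refine ⟨by omega, ?_, ?_⟩
        · rw [extS_appendTwo, if_pos (by omega)]; exact hsm
        · rw [extS_appendTwo, if_neg (by omega), if_neg (by omega)]; simp
      · -- i = m + 1 : but extS there is true, contradiction
        have : i = m + 1 := by omega
        rw [if_neg (by omega), if_neg (by omega)] at hei
        simp [this] at hei

/-! ### The counting step -/

lemma step (m : ℕ) (hm : 6 ≤ m) : N m + 2 ≤ N (m + 2) := by
  classical
  have hmn : 1 ≤ m := by omega
  set F : Finset (Fin m → Bool) := Finset.univ.filter (Q m) with hF
  set A : Finset (Fin (m+2) → Bool) := F.image appendTwo with hA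
  have hAcard : A.card = N m := by
    rw [hA, Finset.card_image_of_injective _ appendTwo_inj]; rfl
  -- last entries
  have hw1last : extS (w1 (m+2)) (m+1) = false := by
    rw [← Bool.not_eq_true, w1_spec]
    simp only [not_and]
    intro _
    omega
  have happlast : ∀ s : Fin m → Bool, extS (appendTwo s) (m+1) = true := by
    intro s
    rw [extS_appendTwo, if_neg (by omega), if_neg (by omega)]
    simp
  have hw2m : extS (w2 (m+2)) m = true := by
    rw [w2_spec]; omega
  have hw2m2 : extS (w2 (m+2)) (m-2) = false := by
    rw [← Bool.not_eq_true, w2_spec]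
    omega
  have hw2m1 : extS (w2 (m+2)) (m-1) = false := by
    rw [← Bool.not_eq_true, w2_spec]
    omega
  have hw1A : w1 (m+2) ∉ A := by
    intro h
    rw [hA, Finset.mem_image] at h
    obtain ⟨s, _, hsw⟩ := h
    rw [← hsw] at hw1last
    rw [happlast s] at hw1last
    simp at hw1last
  have hw2A : w2 (m+2) ∉ A := by
    intro h
    rw [hA, Finset.mem_image] at h
    obtain ⟨s, hsF, hsw⟩ := h
    have hQs : Q m s := by
      rw [hF, Finset.mem_filter] at hsF
      exact hsF.2
    -- from w2 = appendTwo s : extS s (m-1) = false and extS s (m-2) = false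
    have e1 : extS s (m - 1) = false := by
      have := hw2m
      rw [← hsw, extS_appendTwo, if_neg (by omega), if_pos rfl] at this
      simpa using this
    have e2 : extS s (m - 2) = false := by
      have := hw2m2
      rw [← hsw, extS_appendTwo, if_pos (by omega)] at this
      exact this
    -- Q m s maxCond at m-1 fails
    have := hQs.2 (m - 1) (by omega) e1
    have hoob1 : extS s (m - 1 + 1) = false := by
      rw [← Bool.not_eq_true]
      intro h
      have := extS_true_lt h
      omega
    rcases this with ⟨_, _, hc⟩ | ⟨_, hb, _⟩ | ⟨hb, _⟩
    · rw [hoob1] at hc; exact absurd hc (by simp)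
    · rw [show m - 1 - 1 = m - 2 by omega, e2] at hb; exact absurd hb (by simp)
    · rw [hoob1] at hb; exact absurd hb (by simp)
  have hw2last : extS (w2 (m+2)) (m+1) = true := by
    rw [w2_spec]; omega
  have hw12 : w1 (m+2) ≠ w2 (m+2) := by
    intro h
    have : extS (w1 (m+2)) (m+1) = extS (w2 (m+2)) (m+1) := by rw [h]
    rw [hw1last, hw2last] at this
    simp at this
  have hsub : insert (w1 (m+2)) (insert (w2 (m+2)) A) ⊆ Finset.univ.filter (Q (m+2)) := by
    intro x hx
    rw [Finset.mem_insert, Finset.mem_insert] at hx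
    rw [Finset.mem_filter]
    refine ⟨Finset.mem_univ _, ?_⟩
    rcases hx with rfl | rfl | hx
    · exact Q_w1 (m+2) (by omega)
    · exact Q_w2 (m+2) (by omega)
    · rw [hA, Finset.mem_image] at hx
      obtain ⟨s, hsF, rfl⟩ := hx
      rw [hF, Finset.mem_filter] at hsF
      exact Q_appendTwo hm hsF.2
  have hcard : (insert (w1 (m+2)) (insert (w2 (m+2)) A)).card = N m + 2 := by
    rw [Finset.card_insert_of_notMem (by
      rw [Finset.mem_insert]
      push_neg
      exact ⟨hw12, hw1A⟩),
      Finset.card_insert_of_notMem hw2A, hAcard]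
  calc N m + 2 = (insert (w1 (m+2)) (insert (w2 (m+2)) A)).card := hcard.symm
    _ ≤ (Finset.univ.filter (Q (m+2))).card := Finset.card_le_card hsub
    _ = N (m+2) := rfl

lemma N3 : N 3 = 3 := by decide
lemma N4 : N 4 = 3 := by decide
lemma N5 : N 5 = 4 := by decide
lemma N6 : N 6 = 6 := by decide
lemma N7 : N 7 = 9 := by decide

lemma lower6 (n : ℕ) (h : 6 ≤ n) : (n + 1) / 2 + 2 ≤ N n := by
  induction n using Nat.strong_induction_on with
  | _ n ih =>
    by_cases h6 : n = 6
    · subst h6; rw [N6]; omega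
    · by_cases h7 : n = 7
      · subst h7; rw [N7]; omega
      · have h8 : 8 ≤ n := by omega
        have hstep := step (n - 2) (by omega)
        have hih := ih (n - 2) (by omega) (by omega)
        rw [show n - 2 + 2 = n by omega] at hstep
        omega

theorem stmt6' (n : ℕ) (hn : 3 ≤ n) :
    (n + 1) / 2 + 1 ≤ phi (SimpleGraph.pathGraph n) ∧
      (phi (SimpleGraph.pathGraph n) = (n + 1) / 2 + 1 ↔ n = 3 ∨ n = 4 ∨ n = 5) := by
  have hphi := phi_eq n
  by_cases h3 : n = 3
  · subst h3; rw [hphi, N3]; omega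
  · by_cases h4 : n = 4
    · subst h4; rw [hphi, N4]; omega
    · by_cases h5 : n = 5
      · subst h5; rw [hphi, N5]; omega
      · have h6 : 6 ≤ n := by omega
        have := lower6 n h6
        rw [hphi]
        constructor
        · omega
        · constructor
          · intro h; omega
          · intro h; omega

end S6

/-- for `n ≥ 3`, `phi (P_n) ≥ ⌈n/2⌉ + 1`, with equality iff `n ∈ {3, 4, 5}`. -/
theorem stmt6 (n : ℕ) (hn : 3 ≤ n) :
    (n + 1) / 2 + 1 ≤ phi (SimpleGraph.pathGraph n) ∧
      (phi (SimpleGraph.pathGraph n) = (n + 1) / 2 + 1 ↔ n = 3 ∨ n = 4 ∨ n = 5) := by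
  exact S6.stmt6' n hn
end

section
/- Let G be a graph and u a support vertex of G (i.e., u is adjacent to a vertex of degree 1). Then there is no maximal dissociation set S of G with u ∈ S and u isolated in the subgraph induced by S; that is, φ(G, u⁰) = 0. -/
open SimpleGraph

/-- if `u` is a support vertex of `G` (adjacent to a vertex of degree 1), then
no maximal dissociation set contains `u` as an isolated vertex of the induced subgraph:
`phi0 G u = 0`. -/
theorem stmt8 {V : Type*} [Fintype V] (G : SimpleGraph V) (u : V)
    (hsupp : ∃ v, G.Adj u v ∧ (G.neighborSet v).ncard = 1) :
    phi0 G u = 0 := by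
  obtain ⟨v, huv, hv⟩ := hsupp
  have hempty : {S : Set V | IsMaxDissoc G S ∧ u ∈ S ∧ ∀ x ∈ S, ¬ G.Adj u x} = ∅ := by
    ext S
    simp only [Set.mem_setOf_eq, Set.mem_empty_iff_false, iff_false, not_and]
    rintro ⟨hd, hmax⟩ huS hiso
    obtain ⟨a, ha⟩ := Set.ncard_eq_one.mp hv
    have hau : u = a := by
      have hu : u ∈ G.neighborSet v := huv.symm
      rw [ha] at hu; exact hu
    subst hau
    -- ha : G.neighborSet v = {u}
    have hnbr : ∀ x, G.Adj v x → x = u := by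
      intro x hx
      have : x ∈ G.neighborSet v := hx
      rw [ha] at this; exact this
    have hvS : v ∉ S := fun h => hiso v h huv
    have hdiss : IsDissoc G (insert v S) := by
      intro w hw
      rcases hw with rfl | hwS
      · intro x hx y hy
        rw [hnbr x hx.2, hnbr y hy.2]
      · by_cases hwu : w = u
        · subst hwu
          intro x hx y hy
          have hxv : x = v := by
            rcases hx.1 with rfl | hxS
            · rfl
            · exact absurd hx.2 (hiso x hxS)
          have hyv : y = v := by
            rcases hy.1 with rfl | hyS
            · rfl
            · exact absurd hy.2 (hiso y hyS)
          rw [hxv, hyv]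
        · intro x hx y hy
          have hxS : x ∈ S := by
            rcases hx.1 with rfl | hxS
            · exact absurd (hnbr w hx.2.symm) hwu
            · exact hxS
          have hyS : y ∈ S := by
            rcases hy.1 with rfl | hyS
            · exact absurd (hnbr w hy.2.symm) hwu
            · exact hyS
          exact hd w hwS ⟨hxS, hx.2⟩ ⟨hyS, hy.2⟩
    have := hmax (insert v S) hdiss (Set.subset_insert v S)
    exact hvS (this ▸ Set.mem_insert v S)
  unfold phi0
  rw [hempty, Set.ncard_empty]
end

section
/- Let G be a graph and u ∈ V(G). Then φ(G − N[u]) ≥ φ(G, u⁰), i.e., the number of maximal dissociation sets of the graph obtained by deleting the closed neighbourhood of u is at least the number of maximal dissociation sets of G that contain u with u isolated in the induced subgraph. -/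
open SimpleGraph

/-- `φ(G - N[u]) ≥ φ(G, u⁰)`: deleting the closed neighbourhood of `u` yields
at least as many maximal dissociation sets as there are maximal dissociation sets of `G`
containing `u` as an isolated vertex of the induced subgraph. -/
theorem stmt10 {V : Type*} [Fintype V] (G : SimpleGraph V) (u : V) :
    phi0 G u ≤ phi (G.induce {v | v ∉ insert u (G.neighborSet u)}) := by
  classical
  set W : Set V := {v | v ∉ insert u (G.neighborSet u)} with hW
  set G' := G.induce W with hG'
  set f : Set V → Set W := fun S => {x : W | (x : V) ∈ S} with hf
  -- every S in the phi0 set satisfies S = insert u (val '' f S)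
  have key : ∀ S ∈ {S : Set V | IsMaxDissoc G S ∧ u ∈ S ∧ ∀ x ∈ S, ¬ G.Adj u x},
      S = insert u (Subtype.val '' f S) := by
    rintro S ⟨hS, huS, hiso⟩
    ext v
    constructor
    · intro hv
      by_cases hvu : v = u
      · exact hvu ▸ Set.mem_insert _ _
      · refine Set.mem_insert_iff.mpr (Or.inr ?_)
        have hvW : v ∈ W := by
          simp only [hW, Set.mem_setOf_eq, Set.mem_insert_iff, SimpleGraph.mem_neighborSet]
          push_neg
          exact ⟨hvu, hiso v hv⟩
        exact ⟨⟨v, hvW⟩, hv, rfl⟩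
    · rintro (rfl | ⟨x, hx, rfl⟩)
      · exact huS
      · exact hx
  have hadj : ∀ a b : W, G'.Adj a b ↔ G.Adj (a : V) (b : V) := by
    intro a b; simp [hG', SimpleGraph.comap_adj]
  -- f maps phi0 sets to max dissoc sets of G'
  have hmaps : ∀ S ∈ {S : Set V | IsMaxDissoc G S ∧ u ∈ S ∧ ∀ x ∈ S, ¬ G.Adj u x},
      f S ∈ {T : Set W | IsMaxDissoc G' T} := by
    rintro S ⟨hS, huS, hiso⟩
    constructor
    · -- dissociation
      intro a ha b hb c hc
      have := hS.1 (a : V) ha ⟨hb.1, (hadj a b).mp hb.2⟩ ⟨hc.1, (hadj a c).mp hc.2⟩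
      exact Subtype.ext this
    · -- maximal
      intro T hT hsub
      have hTu : ∀ x ∈ T, ¬ G.Adj u (x : V) := by
        intro x hx hadjux
        exact x.2 (Set.mem_insert_iff.mpr (Or.inr hadjux))
      set T' : Set V := insert u (Subtype.val '' T) with hT'
      have hT'dissoc : IsDissoc G T' := by
        intro v hv
        rcases Set.mem_insert_iff.mp hv with rfl | ⟨x, hx, rfl⟩
        · -- v = u : no neighbours of u in T'
          intro b hb c hc
          exfalso
          rcases Set.mem_insert_iff.mp hb.1 with rfl | ⟨y, hy, rfl⟩
          · exact G.irrefl hb.2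
          · exact hTu y hy hb.2
        · -- v in image of T
          intro b hb c hc
          have hbT : ∃ y ∈ T, (y : V) = b := by
            rcases Set.mem_insert_iff.mp hb.1 with rfl | ⟨y, hy, rfl⟩
            · exact absurd (Set.mem_insert_iff.mpr (Or.inr (hb.2.symm))) x.2
            · exact ⟨y, hy, rfl⟩
          have hcT : ∃ y ∈ T, (y : V) = c := by
            rcases Set.mem_insert_iff.mp hc.1 with rfl | ⟨y, hy, rfl⟩
            · exact absurd (Set.mem_insert_iff.mpr (Or.inr (hc.2.symm))) x.2
            · exact ⟨y, hy, rfl⟩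
          obtain ⟨yb, hyb, rfl⟩ := hbT
          obtain ⟨yc, hyc, rfl⟩ := hcT
          have := hT x hx ⟨hyb, (hadj x yb).mpr hb.2⟩ ⟨hyc, (hadj x yc).mpr hc.2⟩
          exact congrArg Subtype.val this
      have hST' : S ⊆ T' := by
        intro v hv
        rw [key S ⟨hS, huS, hiso⟩] at hv
        rcases Set.mem_insert_iff.mp hv with rfl | ⟨x, hx, rfl⟩
        · exact Set.mem_insert _ _
        · exact Set.mem_insert_iff.mpr (Or.inr ⟨x, hsub hx, rfl⟩)
      have hSeq : S = T' := hS.2 T' hT'dissoc hST'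
      ext x
      constructor
      · intro hx; exact hsub hx
      · intro hx
        have : (x : V) ∈ T' := Set.mem_insert_iff.mpr (Or.inr ⟨x, hx, rfl⟩)
        rw [← hSeq] at this
        exact this
  have hfin : {T : Set W | IsMaxDissoc G' T}.Finite := Set.toFinite _
  have hinj : Set.InjOn f {S : Set V | IsMaxDissoc G S ∧ u ∈ S ∧ ∀ x ∈ S, ¬ G.Adj u x} := by
    intro S1 h1 S2 h2 he
    rw [key S1 h1, key S2 h2, he]
  exact Set.ncard_le_ncard_of_injOn f hmaps hinj hfin
end

section
/- Let U be a unicyclic graph with at least 3 vertices and let w ∈ V(U) be a vertex that is not a support vertex of U. Let G₁ be the graph obtained from U by adding k ≥ 2 new pendant vertices v₁, …, v_k each adjacent to w, and let G₂ = G₁ − wv_k + v₁v_k (delete the edge wv_k and add the edge v₁v_k). Then φ(G₁) ≥ φ(G₂). -/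
open SimpleGraph

section aux
variable {V : Type*} {G : SimpleGraph V} {S T : Set V}

lemma isDissoc_mono (hT : IsDissoc G T) (hST : S ⊆ T) : IsDissoc G S := by
  intro v hv a ha b hb
  exact hT v (hST hv) ⟨hST ha.1, ha.2⟩ ⟨hST hb.1, hb.2⟩

lemma isMaxDissoc_iff_insert :
    IsMaxDissoc G S ↔ IsDissoc G S ∧ ∀ x ∉ S, ¬ IsDissoc G (insert x S) := by
  constructor
  · rintro ⟨hS, hmax⟩
    refine ⟨hS, fun x hx hins => hx ?_⟩
    have := hmax (insert x S) hins (Set.subset_insert x S)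
    rw [this]; exact Set.mem_insert x S
  · rintro ⟨hS, hmax⟩
    refine ⟨hS, fun T hT hST => Set.Subset.antisymm hST fun u hu => ?_⟩
    by_contra hus
    exact hmax u hus (isDissoc_mono hT (Set.insert_subset hu hST))

end aux

section adj
variable {V : Type*} (U : SimpleGraph V) (w : V) (k : ℕ)

lemma a1ll (x y : V) : (addPendants U w k).Adj (Sum.inl x) (Sum.inl y) ↔ U.Adj x y := by
  simp only [addPendants, fromRel_adj]
  constructor
  · rintro ⟨hne, h | h⟩
    · aesop
    · have h2 : U.Adj y x := by aesop
      exact h2.symm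
  · intro h; exact ⟨by simp [h.ne], Or.inl (Or.inl ⟨x, y, rfl, rfl, h⟩)⟩

lemma a1lr (x : V) (j : Fin k) : (addPendants U w k).Adj (Sum.inl x) (Sum.inr j) ↔ x = w := by
  simp only [addPendants, fromRel_adj]
  aesop

lemma a1rr (i j : Fin k) : ¬ (addPendants U w k).Adj (Sum.inr i) (Sum.inr j) := by
  simp only [addPendants, fromRel_adj]
  aesop

lemma a2ll (x y : V) : (swapPendant U w k).Adj (Sum.inl x) (Sum.inl y) ↔ U.Adj x y := by
  simp only [swapPendant, fromRel_adj]
  constructor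
  · rintro ⟨hne, h | h⟩
    · aesop
    · have h2 : U.Adj y x := by aesop
      exact h2.symm
  · intro h; exact ⟨by simp [h.ne], Or.inl (Or.inl ⟨x, y, rfl, rfl, h⟩)⟩

lemma a2lr (x : V) (j : Fin k) :
    (swapPendant U w k).Adj (Sum.inl x) (Sum.inr j) ↔ x = w ∧ j.val < k - 1 := by
  simp only [swapPendant, fromRel_adj]
  aesop

lemma a2rr (hk : 2 ≤ k) (i j : Fin k) :
    (swapPendant U w k).Adj (Sum.inr i) (Sum.inr j) ↔
      (i.val = 0 ∧ j.val = k - 1) ∨ (j.val = 0 ∧ i.val = k - 1) := by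
  simp only [swapPendant, fromRel_adj]
  constructor
  · rintro ⟨hne, h | h⟩ <;> aesop
  · rintro (⟨h0, h1⟩ | ⟨h0, h1⟩)
    · exact ⟨by simp [Fin.ext_iff]; omega, Or.inl (Or.inr (Or.inr ⟨i, j, h0, h1, rfl, rfl⟩))⟩
    · exact ⟨by simp [Fin.ext_iff]; omega, Or.inr (Or.inr (Or.inr ⟨j, i, h0, h1, rfl, rfl⟩))⟩

end adj

section micro
variable {V : Type*} {U : SimpleGraph V} {w : V} {k : ℕ}

/-- In G₁, any pendant's neighbour set is a subset of {inl w}, hence subsingleton. -/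
lemma pend1 (W : Set (V ⊕ Fin k)) (i : Fin k) :
    {u | u ∈ W ∧ (addPendants U w k).Adj (Sum.inr i) u}.Subsingleton := by
  rintro a ⟨haW, ha⟩ b ⟨hbW, hb⟩
  cases a with
  | inl x =>
    have hx : x = w := (a1lr U w k x i).1 ha.symm
    cases b with
    | inl y =>
      have hy : y = w := (a1lr U w k y i).1 hb.symm
      rw [hx, hy]
    | inr jb => exact absurd hb (a1rr U w k i jb)
  | inr ja => exact absurd ha (a1rr U w k i ja)

/-- In G₂, if `inl w ∉ W` then any pendant's neighbour set within W is subsingleton. -/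
lemma pend2 (hk : 2 ≤ k) (W : Set (V ⊕ Fin k)) (hW : Sum.inl w ∉ W) (i : Fin k) :
    {u | u ∈ W ∧ (swapPendant U w k).Adj (Sum.inr i) u}.Subsingleton := by
  rintro a ⟨haW, ha⟩ b ⟨hbW, hb⟩
  cases a with
  | inl x =>
    have hx : x = w := ((a2lr U w k x i).1 ha.symm).1
    exact absurd haW (hx ▸ hW)
  | inr ja =>
    cases b with
    | inl y =>
      have hy : y = w := ((a2lr U w k y i).1 hb.symm).1
      exact absurd hbW (hy ▸ hW)
    | inr jb =>
      have h1 := (a2rr U w k hk i ja).1 ha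
      have h2 := (a2rr U w k hk i jb).1 hb
      have : ja = jb := by
        apply Fin.ext
        rcases h1 with ⟨h1a, h1b⟩ | ⟨h1a, h1b⟩ <;> rcases h2 with ⟨h2a, h2b⟩ | ⟨h2a, h2b⟩ <;> omega
      rw [this]

/-- For `x ≠ w`, the neighbour sets of `inl x` in G₁ and G₂ coincide on any W. -/
lemma nbr_eq {x : V} (hx : x ≠ w) (W : Set (V ⊕ Fin k)) :
    {u | u ∈ W ∧ (addPendants U w k).Adj (Sum.inl x) u}
      = {u | u ∈ W ∧ (swapPendant U w k).Adj (Sum.inl x) u} := by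
  ext u
  cases u with
  | inl y => simp [a1ll, a2ll]
  | inr j =>
    simp only [Set.mem_setOf_eq, a1lr, a2lr]
    exact ⟨fun h => absurd h.2 hx, fun h => absurd h.2.1 hx⟩

/-- G₂-neighbours of `inl w` are G₁-neighbours. -/
lemma adj2_to_adj1 {u : V ⊕ Fin k} (h : (swapPendant U w k).Adj (Sum.inl w) u) :
    (addPendants U w k).Adj (Sum.inl w) u := by
  cases u with
  | inl y => exact (a1ll U w k w y).2 ((a2ll U w k w y).1 h)
  | inr j => exact (a1lr U w k w j).2 rfl

end micro

section classes
variable {V : Type*} {U : SimpleGraph V} {w : V} {k : ℕ}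

/-- Class 1: `w ∉ S`. Then `S` is also maximal dissociation in G₁. -/
lemma class1 (hk : 2 ≤ k) {S : Set (V ⊕ Fin k)}
    (hS : IsMaxDissoc (swapPendant U w k) S) (hwS : Sum.inl w ∉ S) :
    IsMaxDissoc (addPendants U w k) S := by
  obtain ⟨hd, hm⟩ := (isMaxDissoc_iff_insert).1 hS
  -- every pendant belongs to S
  have hpend : ∀ j : Fin k, Sum.inr j ∈ S := by
    intro j
    by_contra hj
    apply hm _ hj
    have hwW : Sum.inl w ∉ insert (Sum.inr j : V ⊕ Fin k) S := by
      simp [hwS]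
    intro v hv
    rcases Set.mem_insert_iff.1 hv with rfl | hv
    · exact pend2 hk _ hwW j
    · cases v with
      | inl x =>
        have hx : x ≠ w := fun h => hwS (h ▸ hv)
        have hset : {u | u ∈ insert (Sum.inr j) S ∧ (swapPendant U w k).Adj (Sum.inl x) u}
            = {u | u ∈ S ∧ (swapPendant U w k).Adj (Sum.inl x) u} := by
          ext u
          cases u with
          | inl y =>
            simp only [Set.mem_setOf_eq, Set.mem_insert_iff]
            constructor
            · rintro ⟨hy | hy, hadj⟩
              · exact absurd hy (by simp)
              · exact ⟨hy, hadj⟩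
            · rintro ⟨hy, hadj⟩; exact ⟨Or.inr hy, hadj⟩
          | inr i =>
            simp only [Set.mem_setOf_eq, a2lr]
            exact ⟨fun h => absurd h.2.1 hx, fun h => absurd h.2.1 hx⟩
        rw [hset]
        exact hd _ hv
      | inr i => exact pend2 hk _ hwW i
  -- S is dissociation in G₁
  have hd1 : IsDissoc (addPendants U w k) S := by
    intro v hv
    cases v with
    | inr i => exact pend1 S i
    | inl x =>
      have hx : x ≠ w := fun h => hwS (h ▸ hv)
      rw [nbr_eq hx]
      exact hd _ hv
  rw [isMaxDissoc_iff_insert]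
  refine ⟨hd1, fun u hu hins => ?_⟩
  cases u with
  | inr j => exact hu (hpend j)
  | inl x =>
    by_cases hx : x = w
    · have h0 : (Sum.inr ⟨0, by omega⟩ : V ⊕ Fin k) ∈ insert (Sum.inl x) S ∧
          (addPendants U w k).Adj (Sum.inl x) (Sum.inr ⟨0, by omega⟩) :=
        ⟨Or.inr (hpend _), (a1lr U w k x _).2 hx⟩
      have h1 : (Sum.inr ⟨1, by omega⟩ : V ⊕ Fin k) ∈ insert (Sum.inl x) S ∧
          (addPendants U w k).Adj (Sum.inl x) (Sum.inr ⟨1, by omega⟩) :=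
        ⟨Or.inr (hpend _), (a1lr U w k x _).2 hx⟩
      have := hins (Sum.inl x) (Set.mem_insert _ _) h0 h1
      simp [Fin.ext_iff] at this
    · apply hm _ hu
      intro v hv
      rcases Set.mem_insert_iff.1 hv with rfl | hv
      · rw [← nbr_eq hx]
        exact hins _ (Set.mem_insert _ _)
      · cases v with
        | inl y =>
          have hy : y ≠ w := fun h => hwS (h ▸ hv)
          rw [← nbr_eq hy]
          exact hins _ (Set.mem_insert_of_mem _ hv)
        | inr i =>
          refine pend2 hk _ ?_ i
          simp only [Set.mem_insert_iff]
          rintro (h | h)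
          · exact hx (Sum.inl.inj h).symm
          · exact hwS h

end classes

section classes2
variable {V : Type*} {U : SimpleGraph V} {w : V} {k : ℕ}

/-- Class 2: `w ∈ S`, `p ∉ S`. Then `S` is maximal dissociation in G₁. -/
lemma class2 (hk : 2 ≤ k) {S : Set (V ⊕ Fin k)}
    (hS : IsMaxDissoc (swapPendant U w k) S) (hwS : Sum.inl w ∈ S)
    (hpS : (Sum.inr ⟨k - 1, by omega⟩ : V ⊕ Fin k) ∉ S) :
    IsMaxDissoc (addPendants U w k) S := by
  obtain ⟨hd, hm⟩ := (isMaxDissoc_iff_insert).1 hS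
  set p : V ⊕ Fin k := Sum.inr ⟨k - 1, by omega⟩ with hpdef
  set z0 : V ⊕ Fin k := Sum.inr ⟨0, by omega⟩ with hz0def
  have hadjwz0 : (swapPendant U w k).Adj (Sum.inl w) z0 :=
    (a2lr U w k w _).2 ⟨rfl, by simp; omega⟩
  -- step: z0 ∈ S
  have h0 : z0 ∈ S := by
    by_contra h0
    apply hm p hpS
    intro v hv
    rcases Set.mem_insert_iff.1 hv with rfl | hv
    · -- neighbours of p in insert p S : empty
      rintro a ⟨haW, ha⟩ b ⟨hbW, hb⟩
      exfalso
      cases a with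
      | inl x =>
        have h2 : k - 1 < k - 1 := by simpa using ((a2lr U w k x _).1 ha.symm).2
        omega
      | inr ja =>
        have hrel := (a2rr U w k hk _ ja).1 ha
        have hja : ja = (⟨0, by omega⟩ : Fin k) := by
          simp only [Fin.ext_iff, Fin.val_mk] at hrel ⊢
          rcases hrel with ⟨h1, h2⟩ | ⟨h1, h2⟩ <;> omega
        subst hja
        rcases Set.mem_insert_iff.1 haW with heq | hmem
        · rw [hpdef] at heq
          simp [Fin.ext_iff] at heq
          omega
        · exact h0 hmem
    · cases v with
      | inl x =>
        -- inl x is not adjacent to p, so neighbour set unchanged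
        have hset : {u | u ∈ insert p S ∧ (swapPendant U w k).Adj (Sum.inl x) u}
            = {u | u ∈ S ∧ (swapPendant U w k).Adj (Sum.inl x) u} := by
          ext u
          simp only [Set.mem_setOf_eq, Set.mem_insert_iff]
          constructor
          · rintro ⟨hu | hu, hadj⟩
            · subst hu
              have h2 : k - 1 < k - 1 := by simpa using ((a2lr U w k x _).1 hadj).2
              omega
            · exact ⟨hu, hadj⟩
          · rintro ⟨hu, hadj⟩; exact ⟨Or.inr hu, hadj⟩
        rw [hset]; exact hd _ hv
      | inr i =>
        -- i ≠ 0 (else z0 ∈ S) and i ≠ k-1 (else p ∈ S); all neighbours equal inl w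
        have hi0 : i.val ≠ 0 := by
          intro h
          exact h0 (by rwa [hz0def, show (⟨0, by omega⟩ : Fin k) = i from Fin.ext (by simp [h])])
        have hik : i.val ≠ k - 1 := by
          intro h
          exact hpS (by rwa [hpdef, show (⟨k - 1, by omega⟩ : Fin k) = i from Fin.ext (by simp [h])])
        rintro a ⟨haW, ha⟩ b ⟨hbW, hb⟩
        have key : ∀ c, c ∈ insert p S → (swapPendant U w k).Adj (Sum.inr i) c → c = Sum.inl w := by
          intro c hcW hc
          cases c with
          | inl y =>
            have := (a2lr U w k y i).1 hc.symm
            rw [this.1]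
          | inr jc =>
            exfalso
            have hrel := (a2rr U w k hk i jc).1 hc
            rcases hrel with ⟨h1, h2⟩ | ⟨h1, h2⟩ <;> omega
        rw [key a haW ha, key b hbW hb]
  -- w's neighbours in S are all z0
  have hwn : ∀ u ∈ S, (swapPendant U w k).Adj (Sum.inl w) u → u = z0 := by
    intro u hu ha
    exact hd _ hwS ⟨hu, ha⟩ ⟨h0, hadjwz0⟩
  -- pendants in S have index 0
  have hnp : ∀ j : Fin k, Sum.inr j ∈ S → j.val = 0 := by
    intro j hj
    by_cases hjk : j.val < k - 1
    · have := hwn _ hj ((a2lr U w k w j).2 ⟨rfl, hjk⟩)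
      rw [hz0def] at this
      have := Sum.inr.inj this
      simp [Fin.ext_iff] at this
      exact this
    · exfalso
      apply hpS
      have : j = (⟨k - 1, by omega⟩ : Fin k) := Fin.ext (by simp; omega)
      rwa [hpdef, ← this]
  -- S is dissociation in G₁
  have hd1 : IsDissoc (addPendants U w k) S := by
    intro v hv
    cases v with
    | inr i => exact pend1 S i
    | inl x =>
      by_cases hx : x = w
      · subst hx
        rintro a ⟨haS, ha⟩ b ⟨hbS, hb⟩
        have key : ∀ c, c ∈ S → (addPendants U x k).Adj (Sum.inl x) c → c = z0 := by
          intro c hcS hc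
          cases c with
          | inl y => exact hwn _ hcS ((a2ll U x k x y).2 ((a1ll U x k x y).1 hc))
          | inr j =>
            have hj0 := hnp j hcS
            rw [hz0def]
            congr 1
            exact Fin.ext (by simp [hj0])
        rw [key a haS ha, key b hbS hb]
      · rw [nbr_eq hx]; exact hd _ hv
  rw [isMaxDissoc_iff_insert]
  refine ⟨hd1, fun u hu hins => ?_⟩
  cases u with
  | inr j =>
    have hz : z0 ∈ insert (Sum.inr j) S ∧ (addPendants U w k).Adj (Sum.inl w) z0 :=
      ⟨Or.inr h0, (a1lr U w k w _).2 rfl⟩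
    have hjn : (Sum.inr j : V ⊕ Fin k) ∈ insert (Sum.inr j) S ∧
        (addPendants U w k).Adj (Sum.inl w) (Sum.inr j) :=
      ⟨Set.mem_insert _ _, (a1lr U w k w _).2 rfl⟩
    have heq := hins (Sum.inl w) (Set.mem_insert_of_mem _ hwS) hz hjn
    rw [hz0def] at heq
    have : (⟨0, by omega⟩ : Fin k) = j := Sum.inr.inj heq
    exact hu (this ▸ h0)
  | inl x =>
    have hxw : x ≠ w := fun h => hu (h ▸ hwS)
    apply hm _ hu
    intro v hv
    rcases Set.mem_insert_iff.1 hv with rfl | hv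
    · rw [← nbr_eq hxw]
      exact hins _ (Set.mem_insert _ _)
    · cases v with
      | inl y =>
        by_cases hy : y = w
        · subst hy
          -- G₂-neighbours of w are G₁-neighbours
          refine Set.Subsingleton.anti (hins (Sum.inl y) (Set.mem_insert_of_mem _ hv)) ?_
          rintro a ⟨haW, ha⟩
          exact ⟨haW, adj2_to_adj1 ha⟩
        · rw [← nbr_eq hy]
          exact hins _ (Set.mem_insert_of_mem _ hv)
      | inr i =>
        -- i = 0; neighbours of z0 in insert (inl x) S are all inl w
        have hi0 := hnp i hv
        rintro a ⟨haW, ha⟩ b ⟨hbW, hb⟩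
        have key : ∀ c, c ∈ insert (Sum.inl x) S → (swapPendant U w k).Adj (Sum.inr i) c →
            c = Sum.inl w := by
          intro c hcW hc
          cases c with
          | inl y =>
            have := (a2lr U w k y i).1 hc.symm
            rw [this.1]
          | inr jc =>
            exfalso
            have hrel := (a2rr U w k hk i jc).1 hc
            have hjc : jc.val = k - 1 := by rcases hrel with ⟨h1, h2⟩ | ⟨h1, h2⟩ <;> omega
            have : (Sum.inr jc : V ⊕ Fin k) = p := by
              rw [hpdef]; congr 1; exact Fin.ext (by simp [hjc])
            rcases Set.mem_insert_iff.1 hcW with heq | hmem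
            · rw [this] at heq; exact (by simp [hpdef] : p ≠ Sum.inl x) heq
            · exact hpS (this ▸ hmem)
        rw [key a haW ha, key b hbW hb]

end classes2

section classes34
variable {V : Type*} {U : SimpleGraph V} {w : V} {k : ℕ}

/-- Class 3: `w ∈ S`, `p ∈ S`, and `w` has a G₂-neighbour in `S`.
Then `S \ {p}` is maximal dissociation in G₁. -/
lemma class3 (hk : 2 ≤ k) {S : Set (V ⊕ Fin k)}
    (hS : IsMaxDissoc (swapPendant U w k) S) (hwS : Sum.inl w ∈ S)
    (hpS : (Sum.inr ⟨k - 1, by omega⟩ : V ⊕ Fin k) ∈ S)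
    (hex : ∃ u ∈ S, (swapPendant U w k).Adj (Sum.inl w) u) :
    IsMaxDissoc (addPendants U w k) (S \ {(Sum.inr ⟨k - 1, by omega⟩ : V ⊕ Fin k)}) := by
  obtain ⟨hd, hm⟩ := (isMaxDissoc_iff_insert).1 hS
  set p : V ⊕ Fin k := Sum.inr ⟨k - 1, by omega⟩ with hpdef
  set z0 : V ⊕ Fin k := Sum.inr ⟨0, by omega⟩ with hz0def
  obtain ⟨u0, hu0S, hu0a⟩ := hex
  have hu0p : u0 ≠ p := by
    rintro rfl
    have h2 : k - 1 < k - 1 := by simpa using ((a2lr U w k w _).1 hu0a).2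
    omega
  have hadjwz0 : (swapPendant U w k).Adj (Sum.inl w) z0 :=
    (a2lr U w k w _).2 ⟨rfl, by simp; omega⟩
  have hadz0p : (swapPendant U w k).Adj z0 p :=
    (a2rr U w k hk _ _).2 (Or.inl ⟨by simp, by simp⟩)
  -- z0 ∉ S
  have h0 : z0 ∉ S := by
    intro h0
    have := hd z0 h0 ⟨hwS, hadjwz0.symm⟩ ⟨hpS, hadz0p⟩
    simp [hpdef] at this
  -- u0 is a G₁-neighbour of w
  have hu0a1 : (addPendants U w k).Adj (Sum.inl w) u0 := adj2_to_adj1 hu0a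
  -- a generic fact: for inr i ∈ S, all G₂-neighbours of inr i in any W with
  -- z0 ∉ W equal inl w
  have keyr : ∀ (W : Set (V ⊕ Fin k)) (i : Fin k), Sum.inr i ∈ S → z0 ∉ W →
      ∀ c ∈ W, (swapPendant U w k).Adj (Sum.inr i) c → c = Sum.inl w := by
    intro W i hiS hz0W c hcW hc
    cases c with
    | inl y =>
      have := (a2lr U w k y i).1 hc.symm
      rw [this.1]
    | inr jc =>
      exfalso
      have hrel := (a2rr U w k hk i jc).1 hc
      rcases hrel with ⟨h1, h2⟩ | ⟨h1, h2⟩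
      · -- i = 0 : contradiction with z0 ∉ S
        apply h0
        rwa [show z0 = Sum.inr i by rw [hz0def]; congr 1; exact Fin.ext (by simp [h1])]
      · -- jc = 0 : z0 ∈ W, contradiction
        apply hz0W
        rwa [show z0 = Sum.inr jc by rw [hz0def]; congr 1; exact Fin.ext (by simp [h1])]
  -- dissociation in G₁
  have hd1 : IsDissoc (addPendants U w k) (S \ {p}) := by
    intro v hv
    obtain ⟨hvS, hvp⟩ := hv
    cases v with
    | inr i => exact pend1 _ i
    | inl x =>
      by_cases hx : x = w
      · subst hx
        -- every G₁-neighbour of w in S \ {p} is a G₂-neighbour of w in S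
        rintro a ⟨⟨haS, hap⟩, ha⟩ b ⟨⟨hbS, hbp⟩, hb⟩
        have key : ∀ c, c ∈ S → c ≠ p → (addPendants U x k).Adj (Sum.inl x) c →
            (swapPendant U x k).Adj (Sum.inl x) c := by
          intro c hcS hcp hc
          cases c with
          | inl y => exact (a2ll U x k x y).2 ((a1ll U x k x y).1 hc)
          | inr j =>
            refine (a2lr U x k x j).2 ⟨rfl, ?_⟩
            have : j.val ≠ k - 1 := by
              intro h
              exact hcp (by rw [hpdef]; congr 1; exact Fin.ext (by simp [h]))
            omega
        exact hd _ hwS ⟨haS, key a haS hap ha⟩ ⟨hbS, key b hbS hbp hb⟩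
      · rw [nbr_eq hx]
        refine Set.Subsingleton.anti (hd _ hvS) ?_
        rintro a ⟨⟨haS, _⟩, ha⟩
        exact ⟨haS, ha⟩
  rw [isMaxDissoc_iff_insert]
  refine ⟨hd1, fun u hu hins => ?_⟩
  have hwSp : Sum.inl w ∈ S \ {p} := ⟨hwS, by simp [hpdef]⟩
  have hu0Sp : u0 ∈ S \ {p} := ⟨hu0S, hu0p⟩
  cases u with
  | inr j =>
    -- w would get two G₁-neighbours u0 and inr j
    have h1 : (Sum.inr j : V ⊕ Fin k) ∈ insert (Sum.inr j) (S \ {p}) ∧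
        (addPendants U w k).Adj (Sum.inl w) (Sum.inr j) :=
      ⟨Set.mem_insert _ _, (a1lr U w k w _).2 rfl⟩
    have h2 : u0 ∈ insert (Sum.inr j) (S \ {p}) ∧ (addPendants U w k).Adj (Sum.inl w) u0 :=
      ⟨Set.mem_insert_of_mem _ hu0Sp, hu0a1⟩
    have heq := hins (Sum.inl w) (Set.mem_insert_of_mem _ hwSp) h2 h1
    exact hu (heq ▸ hu0Sp)
  | inl x =>
    have hxS : Sum.inl x ∉ S := fun h => hu ⟨h, by simp [hpdef]⟩
    have hxw : x ≠ w := fun h => hxS (h ▸ hwS)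
    apply hm _ hxS
    intro v hv
    rcases Set.mem_insert_iff.1 hv with rfl | hv
    · -- neighbours of inl x in G₂ over insert (inl x) S: reduce to G₁ over insert (inl x) (S\{p})
      refine Set.Subsingleton.anti (hins (Sum.inl x) (Set.mem_insert _ _)) ?_
      rintro a ⟨haW, ha⟩
      cases a with
      | inl y =>
        refine ⟨?_, (a1ll U w k x y).2 ((a2ll U w k x y).1 ha)⟩
        rcases Set.mem_insert_iff.1 haW with heq | hmem
        · exact heq ▸ Set.mem_insert _ _
        · exact Set.mem_insert_of_mem _ ⟨hmem, by simp [hpdef]⟩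
      | inr j =>
        exact absurd ((a2lr U w k x j).1 ha).1 hxw
    · cases v with
      | inr i =>
        -- all G₂-neighbours of inr i in insert (inl x) S equal inl w
        have hz0W : z0 ∉ insert (Sum.inl x) S := by
          simp only [Set.mem_insert_iff]
          rintro (h | h)
          · simp [hz0def] at h
          · exact h0 h
        rintro a ⟨haW, ha⟩ b ⟨hbW, hb⟩
        rw [keyr _ i hv hz0W a haW ha, keyr _ i hv hz0W b hbW hb]
      | inl y =>
        by_cases hy : y = w
        · subst hy
          -- all G₂-neighbours of w in insert (inl x) S equal u0
          rintro a ⟨haW, ha⟩ b ⟨hbW, hb⟩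
          have key : ∀ c, c ∈ insert (Sum.inl x) S → (swapPendant U y k).Adj (Sum.inl y) c →
              c = u0 := by
            intro c hcW hc
            rcases Set.mem_insert_iff.1 hcW with rfl | hcS
            · -- c = inl x : contradiction via hins
              exfalso
              have hc1 : (addPendants U y k).Adj (Sum.inl y) (Sum.inl x) := adj2_to_adj1 hc
              have h1 : (Sum.inl x : V ⊕ Fin k) ∈ insert (Sum.inl x) (S \ {p}) ∧
                  (addPendants U y k).Adj (Sum.inl y) (Sum.inl x) := ⟨Set.mem_insert _ _, hc1⟩
              have h2 : u0 ∈ insert (Sum.inl x) (S \ {p}) ∧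
                  (addPendants U y k).Adj (Sum.inl y) u0 :=
                ⟨Set.mem_insert_of_mem _ hu0Sp, hu0a1⟩
              have heq := hins (Sum.inl y) (Set.mem_insert_of_mem _ hwSp) h1 h2
              exact hxS (heq ▸ hu0S)
            · exact hd _ hwS ⟨hcS, hc⟩ ⟨hu0S, hu0a⟩
          rw [key a haW ha, key b hbW hb]
        · rw [show {u | u ∈ insert (Sum.inl x) S ∧ (swapPendant U w k).Adj (Sum.inl y) u}
              = {u | u ∈ insert (Sum.inl x) S ∧ (addPendants U w k).Adj (Sum.inl y) u}
              from (nbr_eq hy _).symm]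
          refine Set.Subsingleton.anti
            (hins (Sum.inl y) (Set.mem_insert_of_mem _ ⟨hv, by simp [hpdef]⟩)) ?_
          rintro a ⟨haW, ha⟩
          cases a with
          | inl z =>
            refine ⟨?_, ha⟩
            rcases Set.mem_insert_iff.1 haW with heq | hmem
            · exact heq ▸ Set.mem_insert _ _
            · exact Set.mem_insert_of_mem _ ⟨hmem, by simp [hpdef]⟩
          | inr j =>
            exact absurd ((a1lr U w k y j).1 ha) hy

/-- Class 4: `w ∈ S`, `p ∈ S`, and `w` has no G₂-neighbour in `S`.
Then `S` is maximal dissociation in G₁. -/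
lemma class4 (hk : 2 ≤ k) {S : Set (V ⊕ Fin k)}
    (hS : IsMaxDissoc (swapPendant U w k) S) (hwS : Sum.inl w ∈ S)
    (hpS : (Sum.inr ⟨k - 1, by omega⟩ : V ⊕ Fin k) ∈ S)
    (hne : ∀ u ∈ S, ¬ (swapPendant U w k).Adj (Sum.inl w) u) :
    IsMaxDissoc (addPendants U w k) S := by
  obtain ⟨hd, hm⟩ := (isMaxDissoc_iff_insert).1 hS
  set p : V ⊕ Fin k := Sum.inr ⟨k - 1, by omega⟩ with hpdef
  set z0 : V ⊕ Fin k := Sum.inr ⟨0, by omega⟩ with hz0def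
  have hadjwz0 : (swapPendant U w k).Adj (Sum.inl w) z0 :=
    (a2lr U w k w _).2 ⟨rfl, by simp; omega⟩
  have h0 : z0 ∉ S := fun h => hne z0 h hadjwz0
  have hd1 : IsDissoc (addPendants U w k) S := by
    intro v hv
    cases v with
    | inr i => exact pend1 S i
    | inl x =>
      by_cases hx : x = w
      · subst hx
        rintro a ⟨haS, ha⟩ b ⟨hbS, hb⟩
        have key : ∀ c, c ∈ S → (addPendants U x k).Adj (Sum.inl x) c → c = p := by
          intro c hcS hc
          cases c with
          | inl y =>
            exact absurd ((a2ll U x k x y).2 ((a1ll U x k x y).1 hc)) (hne _ hcS)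
          | inr j =>
            by_cases hj : j.val < k - 1
            · exact absurd ((a2lr U x k x j).2 ⟨rfl, hj⟩) (hne _ hcS)
            · rw [hpdef]; congr 1; exact Fin.ext (by simp; omega)
        rw [key a haS ha, key b hbS hb]
      · rw [nbr_eq hx]; exact hd _ hv
  rw [isMaxDissoc_iff_insert]
  refine ⟨hd1, fun u hu hins => ?_⟩
  cases u with
  | inr j =>
    have h1 : (Sum.inr j : V ⊕ Fin k) ∈ insert (Sum.inr j) S ∧
        (addPendants U w k).Adj (Sum.inl w) (Sum.inr j) :=
      ⟨Set.mem_insert _ _, (a1lr U w k w _).2 rfl⟩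
    have h2 : p ∈ insert (Sum.inr j) S ∧ (addPendants U w k).Adj (Sum.inl w) p :=
      ⟨Set.mem_insert_of_mem _ hpS, (a1lr U w k w _).2 rfl⟩
    have heq := hins (Sum.inl w) (Set.mem_insert_of_mem _ hwS) h2 h1
    exact hu (heq ▸ hpS)
  | inl x =>
    have hxw : x ≠ w := fun h => hu (h ▸ hwS)
    apply hm _ hu
    intro v hv
    rcases Set.mem_insert_iff.1 hv with rfl | hv
    · rw [← nbr_eq hxw]
      exact hins _ (Set.mem_insert _ _)
    · cases v with
      | inl y =>
        by_cases hy : y = w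
        · subst hy
          rintro a ⟨haW, ha⟩ b ⟨hbW, hb⟩
          have key : ∀ c, c ∈ insert (Sum.inl x) S → (swapPendant U y k).Adj (Sum.inl y) c →
              c = Sum.inl x := by
            intro c hcW hc
            rcases Set.mem_insert_iff.1 hcW with rfl | hcS
            · rfl
            · exact absurd hc (hne _ hcS)
          rw [key a haW ha, key b hbW hb]
        · rw [← nbr_eq hy]
          exact hins _ (Set.mem_insert_of_mem _ hv)
      | inr i =>
        rintro a ⟨haW, ha⟩ b ⟨hbW, hb⟩
        exfalso
        have key : ∀ c, c ∈ insert (Sum.inl x) S → ¬ (swapPendant U w k).Adj (Sum.inr i) c := by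
          intro c hcW hc
          cases c with
          | inl y =>
            have hy := (a2lr U w k y i).1 hc.symm
            exact hne (Sum.inr i) hv ((a2lr U w k w i).2 ⟨rfl, hy.2⟩)
          | inr jc =>
            have hrel := (a2rr U w k hk i jc).1 hc
            rcases hrel with ⟨h1, h2⟩ | ⟨h1, h2⟩
            · exact h0 (by rwa [show z0 = Sum.inr i by
                rw [hz0def]; congr 1; exact Fin.ext (by simp [h1])])
            · have : z0 = Sum.inr jc := by
                rw [hz0def]; congr 1; exact Fin.ext (by simp [h1])
              rcases Set.mem_insert_iff.1 hcW with heq | hmem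
              · rw [← this] at heq; simp [hz0def] at heq
              · exact h0 (this ▸ hmem)
        exact key a haW ha

end classes34

/-- let `U` be a unicyclic graph with at least 3 vertices and `w` a vertex of `U`
that is not a support vertex. Let `G₁` be obtained from `U` by adding `k ≥ 2` pendant vertices
`v₁, …, v_k` at `w`, and let `G₂ = G₁ - w v_k + v₁ v_k`. Then `φ(G₁) ≥ φ(G₂)`. -/
theorem stmt16 {V : Type*} [Fintype V] (U : SimpleGraph V) (hU : IsUnicyclic U)
    (hV : 3 ≤ Fintype.card V) (w : V)
    (hw : ¬ ∃ v, U.Adj w v ∧ (U.neighborSet v).ncard = 1)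
    (k : ℕ) (hk : 2 ≤ k) :
    phi (swapPendant U w k) ≤ phi (addPendants U w k) := by
  classical
  set p : V ⊕ Fin k := Sum.inr ⟨k - 1, by omega⟩ with hpdef
  set Φ : Set (V ⊕ Fin k) → Set (V ⊕ Fin k) := fun S =>
    if Sum.inl w ∈ S ∧ p ∈ S ∧ ∃ u ∈ S, (swapPendant U w k).Adj (Sum.inl w) u
    then S \ {p} else S with hΦ
  have hmap : ∀ S ∈ {S | IsMaxDissoc (swapPendant U w k) S},
      Φ S ∈ {S | IsMaxDissoc (addPendants U w k) S} := by
    intro S hS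
    simp only [Set.mem_setOf_eq] at hS ⊢
    by_cases hc : Sum.inl w ∈ S ∧ p ∈ S ∧ ∃ u ∈ S, (swapPendant U w k).Adj (Sum.inl w) u
    · simp only [hΦ, if_pos hc]
      exact class3 hk hS hc.1 hc.2.1 hc.2.2
    · simp only [hΦ, if_neg hc]
      by_cases h1 : Sum.inl w ∈ S
      · by_cases h2 : p ∈ S
        · have h3 : ∀ u ∈ S, ¬ (swapPendant U w k).Adj (Sum.inl w) u := by
            intro u hu ha
            exact hc ⟨h1, h2, u, hu, ha⟩
          exact class4 hk hS h1 h2 h3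
        · exact class2 hk hS h1 h2
      · exact class1 hk hS h1
  have hsub : ∀ S : Set (V ⊕ Fin k), Φ S ⊆ S ∧ S ⊆ Φ S ∪ {p} := by
    intro S
    simp only [hΦ]
    split_ifs with h
    · exact ⟨Set.diff_subset, fun u hu => by
        by_cases hup : u = p
        · exact Or.inr (by simp [hup])
        · exact Or.inl ⟨hu, hup⟩⟩
    · exact ⟨subset_rfl, Set.subset_union_left⟩
  have hinj : Set.InjOn Φ {S | IsMaxDissoc (swapPendant U w k) S} := by
    intro S hS S' hS' h
    simp only [Set.mem_setOf_eq] at hS hS'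
    by_cases hp : p ∈ S'
    · have hss : S ⊆ S' := by
        refine (hsub S).2.trans ?_
        rw [h]
        exact Set.union_subset (hsub S').1 (by simpa using hp)
      exact hS.2 S' hS'.1 hss
    · have hfix : Φ S' = S' := by
        refine Set.Subset.antisymm (hsub S').1 (fun u hu => ?_)
        rcases (hsub S').2 hu with h' | h'
        · exact h'
        · exact absurd (by simpa using h' : u = p) (fun he => hp (he ▸ hu))
      have hss : S' ⊆ S := by
        rw [← hfix, ← h]
        exact (hsub S).1
      exact (hS'.2 S hS.1 hss).symm
  exact Set.ncard_le_ncard_of_injOn Φ hmap hinj (Set.toFinite _)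
end

section
/- Let U be a unicyclic graph with at least 3 vertices, let w ∈ V(U), and let G₁ be the graph obtained from U by adding k ≥ 2 new pendant vertices v₁, …, v_k each adjacent to w. Then the number of maximal dissociation sets of G₁ that do not contain w equals φ(U − w); that is, φ(G₁, w̄) = φ(U − w). -/
open SimpleGraph

/-!
If `w ∉ S`, the pendant vertices `v₁, …, v_k` have their only neighbour outside `S`, so a
maximal dissociation set of `G₁` avoiding `w` contains all of them; conversely, once two pendants
lie in a dissociation set, `w` cannot be added to it. Hence `S ↦ S ∩ V(U - w)` is a bijection from
the maximal dissociation sets of `G₁` avoiding `w` onto those of `U - w`, with inverse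
`T ↦ T ∪ {v₁, …, v_k}`.
-/

namespace addPendants

variable {V : Type*} {U : SimpleGraph V} {w : V} {k : ℕ}

@[simp]
lemma adj_inl_inl {x y : V} : (addPendants U w k).Adj (.inl x) (.inl y) ↔ U.Adj x y := by
  simp only [addPendants, fromRel_adj, ne_eq, Sum.inl.injEq, reduceCtorEq, exists_and_left,
    exists_eq_left', and_false, exists_false, or_false]
  exact ⟨fun ⟨_, h⟩ => h.elim id fun h => h.symm, fun h => ⟨h.ne, .inl h⟩⟩

@[simp]
lemma adj_inr_left {j : Fin k} {b : V ⊕ Fin k} :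
    (addPendants U w k).Adj (.inr j) b ↔ b = .inl w := by
  cases b <;> simp [addPendants, fromRel_adj, eq_comm]

@[simp]
lemma adj_inr_right {j : Fin k} {b : V ⊕ Fin k} :
    (addPendants U w k).Adj b (.inr j) ↔ b = .inl w := by
  rw [adj_comm, adj_inr_left]

end addPendants

section PendantLift

variable {V : Type*} {U : SimpleGraph V} {w : V} {k : ℕ}

def restrictPendants (w : V) (k : ℕ) (S : Set (V ⊕ Fin k)) : Set {v : V // v ≠ w} :=
  {x | Sum.inl x.1 ∈ S}

def liftPendants (w : V) (k : ℕ) (T : Set {v : V // v ≠ w}) : Set (V ⊕ Fin k) :=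
  {a | a.elim (fun x => ∃ h : x ≠ w, ⟨x, h⟩ ∈ T) (fun _ => True)}

lemma inr_mem_liftPendants {T : Set {v : V // v ≠ w}} {j : Fin k} :
    Sum.inr j ∈ liftPendants w k T :=
  trivial

lemma inl_notMem_liftPendants {T : Set {v : V // v ≠ w}} :
    Sum.inl w ∉ liftPendants w k T :=
  fun ⟨h, _⟩ => h rfl

lemma restrictPendants_liftPendants (T : Set {v : V // v ≠ w}) :
    restrictPendants w k (liftPendants w k T) = T := by
  ext x
  exact ⟨fun ⟨_, hx⟩ => hx, fun hx => ⟨x.2, hx⟩⟩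

lemma liftPendants_injective : Function.Injective (liftPendants (V := V) w k) :=
  Function.LeftInverse.injective restrictPendants_liftPendants

lemma liftPendants_mono {T T' : Set {v : V // v ≠ w}} (h : T ⊆ T') :
    liftPendants w k T ⊆ liftPendants w k T' := by
  rintro (x | j) hx
  · obtain ⟨hxw, hxT⟩ := hx
    exact ⟨hxw, h hxT⟩
  · trivial

lemma liftPendants_restrictPendants {S : Set (V ⊕ Fin k)} (hw : Sum.inl w ∉ S)
    (hpend : ∀ j, Sum.inr j ∈ S) : liftPendants w k (restrictPendants w k S) = S := by
  ext (x | j)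
  · exact ⟨fun ⟨_, hx⟩ => hx, fun hx => ⟨fun h => hw (h ▸ hx), hx⟩⟩
  · exact ⟨fun _ => hpend j, fun _ => trivial⟩

lemma isDissoc_restrictPendants {S : Set (V ⊕ Fin k)} (hS : IsDissoc (addPendants U w k) S) :
    IsDissoc (U.induce {v | v ≠ w}) (restrictPendants w k S) := by
  intro x hx y₁ ⟨hy₁, hxy₁⟩ y₂ ⟨hy₂, hxy₂⟩
  have h₁ : Sum.inl y₁.1 ∈ {u | u ∈ S ∧ (addPendants U w k).Adj (.inl x.1) u} :=
    ⟨hy₁, addPendants.adj_inl_inl.2 hxy₁⟩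
  have h₂ : Sum.inl y₂.1 ∈ {u | u ∈ S ∧ (addPendants U w k).Adj (.inl x.1) u} :=
    ⟨hy₂, addPendants.adj_inl_inl.2 hxy₂⟩
  exact Subtype.ext (Sum.inl_injective (hS _ hx h₁ h₂))

lemma isDissoc_liftPendants {T : Set {v : V // v ≠ w}}
    (hT : IsDissoc (U.induce {v | v ≠ w}) T) :
    IsDissoc (addPendants U w k) (liftPendants w k T) := by
  rintro (x | j) hv
  · obtain ⟨hxw, hxT⟩ := hv
    -- a neighbour of `x ≠ w` in the lifted set is not a pendant, so it lies in `T`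
    have hnbr : ∀ u ∈ {u | u ∈ liftPendants w k T ∧ (addPendants U w k).Adj (.inl x) u},
        ∃ y ∈ {y | y ∈ T ∧ (U.induce {v | v ≠ w}).Adj ⟨x, hxw⟩ y}, u = .inl y.1 := by
      rintro (y | j) ⟨hu, hxu⟩
      · obtain ⟨hyw, hyT⟩ := hu
        exact ⟨⟨y, hyw⟩, ⟨hyT, by simpa using hxu⟩, rfl⟩
      · exact absurd (Sum.inl_injective (addPendants.adj_inr_right.1 hxu)) hxw
    intro u₁ hu₁ u₂ hu₂
    obtain ⟨y₁, hy₁, rfl⟩ := hnbr u₁ hu₁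
    obtain ⟨y₂, hy₂, rfl⟩ := hnbr u₂ hu₂
    rw [hT _ hxT hy₁ hy₂]
  · rintro u ⟨hu, hju⟩
    exact absurd (addPendants.adj_inr_left.1 hju ▸ hu) inl_notMem_liftPendants

lemma inr_mem_of_isMaxDissoc {S : Set (V ⊕ Fin k)} (hS : IsMaxDissoc (addPendants U w k) S)
    (hw : Sum.inl w ∉ S) (j : Fin k) : Sum.inr j ∈ S := by
  suffices hins : IsDissoc (addPendants U w k) (insert (.inr j) S) by
    exact (hS.2 _ hins (Set.subset_insert _ _)) ▸ Set.mem_insert _ _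
  -- the only neighbour `w` of the new vertex is outside `S`, so no degree changes
  have hnbr : ∀ v ∈ S, ∀ u ∈ insert (.inr j) S, (addPendants U w k).Adj v u → u ∈ S := by
    rintro v hv u (rfl | hu) hvu
    · exact absurd (addPendants.adj_inr_right.1 hvu ▸ hv) hw
    · exact hu
  rintro v (rfl | hv)
  · rintro u ⟨hu, hju⟩
    rw [addPendants.adj_inr_left.1 hju] at hu
    exact absurd hu (by simpa using hw)
  · intro u₁ hu₁ u₂ hu₂
    exact hS.1 v hv ⟨hnbr v hv _ hu₁.1 hu₁.2, hu₁.2⟩ ⟨hnbr v hv _ hu₂.1 hu₂.2, hu₂.2⟩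

lemma inl_notMem_of_isDissoc (hk : 2 ≤ k) {S : Set (V ⊕ Fin k)}
    (hS : IsDissoc (addPendants U w k) S) (hpend : ∀ j, Sum.inr j ∈ S) : Sum.inl w ∉ S := by
  intro hw
  have h₀ : Sum.inr ⟨0, by omega⟩ ∈ {u | u ∈ S ∧ (addPendants U w k).Adj (.inl w) u} :=
    ⟨hpend _, addPendants.adj_inr_right.2 rfl⟩
  have h₁ : Sum.inr ⟨1, by omega⟩ ∈ {u | u ∈ S ∧ (addPendants U w k).Adj (.inl w) u} :=
    ⟨hpend _, addPendants.adj_inr_right.2 rfl⟩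
  simpa using hS _ hw h₀ h₁

lemma isMaxDissoc_liftPendants (hk : 2 ≤ k) {T : Set {v : V // v ≠ w}}
    (hT : IsMaxDissoc (U.induce {v | v ≠ w}) T) :
    IsMaxDissoc (addPendants U w k) (liftPendants w k T) := by
  refine ⟨isDissoc_liftPendants hT.1, fun S hS hTS => ?_⟩
  have hpend : ∀ j, Sum.inr j ∈ S := fun j => hTS inr_mem_liftPendants
  have hres : T = restrictPendants w k S :=
    hT.2 _ (isDissoc_restrictPendants hS) fun x hx => hTS ⟨x.2, hx⟩
  rw [hres, liftPendants_restrictPendants (inl_notMem_of_isDissoc hk hS hpend) hpend]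

lemma isMaxDissoc_restrictPendants {S : Set (V ⊕ Fin k)}
    (hS : IsMaxDissoc (addPendants U w k) S) (hw : Sum.inl w ∉ S) :
    IsMaxDissoc (U.induce {v | v ≠ w}) (restrictPendants w k S) := by
  have hlift := liftPendants_restrictPendants hw (inr_mem_of_isMaxDissoc hS hw)
  refine ⟨isDissoc_restrictPendants hS.1, fun T hT hST => ?_⟩
  have hST' := hS.2 _ (isDissoc_liftPendants hT) (hlift ▸ liftPendants_mono hST)
  rw [hST', restrictPendants_liftPendants]

end PendantLift

theorem stmt17_general {V : Type*} (U : SimpleGraph V) (w : V) (k : ℕ) (hk : 2 ≤ k) :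
    phiNot (addPendants U w k) (Sum.inl w) = phi (U.induce {v | v ≠ w}) := by
  have hbij : {S | IsMaxDissoc (addPendants U w k) S ∧ Sum.inl w ∉ S} =
      liftPendants w k '' {T | IsMaxDissoc (U.induce {v | v ≠ w}) T} := by
    ext S
    constructor
    · rintro ⟨hS, hw⟩
      exact ⟨_, isMaxDissoc_restrictPendants hS hw,
        liftPendants_restrictPendants hw (inr_mem_of_isMaxDissoc hS hw)⟩
    · rintro ⟨T, hT, rfl⟩
      exact ⟨isMaxDissoc_liftPendants hk hT, inl_notMem_liftPendants⟩
  rw [phiNot, phi, hbij, Set.ncard_image_of_injective _ liftPendants_injective]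
  rfl

/-- let `U` be a unicyclic graph with at least 3 vertices, `w ∈ V(U)`, and `G₁`
obtained from `U` by adding `k ≥ 2` pendant vertices at `w`. Then the number of maximal
dissociation sets of `G₁` not containing `w` equals `φ(U - w)`. -/
theorem stmt17 {V : Type*} [Fintype V] (U : SimpleGraph V) (hU : IsUnicyclic U)
    (hV : 3 ≤ Fintype.card V) (w : V) (k : ℕ) (hk : 2 ≤ k) :
    phiNot (addPendants U w k) (Sum.inl w) = phi (U.induce {v | v ≠ w}) :=
  stmt17_general U w k hk
end
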